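/- arXiv:1907.08408 — 4 statements merged into one kernel-verified Lean document; each statement's English description precedes it below -/
import Mathlib

section
/- Let s, t, p ≥ 1 be real numbers, A, B invertible n×n complex matrices and Q an n×n Hermitian positive definite matrix with largest eigenvalue λ₁(Q) ≤ 1. If there exists a Hermitian positive definite matrix X with X^s + A*X^{-t}A + B*X^{-p}B = Q, then ρ(A)² < q^q/(q+1)^(q+1) and ρ(B)² < q^q/(q+1)^(q+1), where q = min{t/s, p/s} and ρ(·) denotes the spectral radius. -/
open Matrix Filter
open scoped ComplexOrder

/-- Real power of a Hermitian matrix, via the spectral decomposition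
(junk value `X` if `X` is not Hermitian). -/
noncomputable def hrpow {n : ℕ} (X : Matrix (Fin n) (Fin n) ℂ) (r : ℝ) :
    Matrix (Fin n) (Fin n) ℂ :=
  if hX : X.IsHermitian then
    (hX.eigenvectorUnitary : Matrix (Fin n) (Fin n) ℂ) *
      Matrix.diagonal (fun i => ((hX.eigenvalues i ^ r : ℝ) : ℂ)) *
      (hX.eigenvectorUnitary : Matrix (Fin n) (Fin n) ℂ)ᴴ
  else X

/-- Largest eigenvalue of a Hermitian matrix (junk value `0` otherwise). -/
noncomputable def lamMax {n : ℕ} (X : Matrix (Fin n) (Fin n) ℂ) : ℝ :=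
  if hX : X.IsHermitian then ⨆ i, hX.eigenvalues i else 0

/-- Smallest eigenvalue of a Hermitian matrix (junk value `0` otherwise). -/
noncomputable def lamMin {n : ℕ} (X : Matrix (Fin n) (Fin n) ℂ) : ℝ :=
  if hX : X.IsHermitian then ⨅ i, hX.eigenvalues i else 0

/-- The spectral (ℓ²-operator) norm of a complex matrix. -/
noncomputable def specNorm {n : ℕ} (A : Matrix (Fin n) (Fin n) ℂ) : ℝ :=
  ‖Matrix.toEuclideanCLM (𝕜 := ℂ) A‖

/-- The spectral radius of a complex matrix. -/
noncomputable def specRad {n : ℕ} (A : Matrix (Fin n) (Fin n) ℂ) : ℝ :=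
  (spectralRadius ℂ A).toReal

/-- The Loewner order: `lle X Y` iff `Y - X` is positive semidefinite. -/
def lle {n : ℕ} (X Y : Matrix (Fin n) (Fin n) ℂ) : Prop := (Y - X).PosSemidef

namespace StmtAux

/-! ### Scalar lemmas -/

lemma tangent {u μ r : ℝ} (hu : 0 < u) (hμ : 0 < μ) (hr : 0 < r) :
    (1 + r) * μ ^ (-r) - r * (μ ^ (-r - 1) * u) ≤ u ^ (-r) := by
  have h1r : (0:ℝ) < 1 + r := by linarith
  have key := Real.geom_mean_le_arith_mean2_weighted
    (w₁ := 1/(1+r)) (w₂ := r/(1+r)) (p₁ := u ^ (-r)) (p₂ := μ ^ (-r-1) * u)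
    (by positivity) (by positivity)
    (Real.rpow_nonneg hu.le _) (by positivity)
    (by field_simp)
  have hgm : (u ^ (-r)) ^ ((1:ℝ)/(1+r)) * (μ ^ (-r-1) * u) ^ (r/(1+r)) = μ ^ (-r) := by
    rw [Real.mul_rpow (Real.rpow_nonneg hμ.le _) hu.le,
      ← Real.rpow_mul hu.le, ← Real.rpow_mul hμ.le, mul_left_comm, ← Real.rpow_add hu]
    have h0 : -r * (1/(1+r)) + r/(1+r) = 0 := by field_simp; ring
    rw [h0, Real.rpow_zero, mul_one]
    congr 1
    field_simp
    ring
  rw [hgm] at key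
  have := mul_le_mul_of_nonneg_left key h1r.le
  calc (1 + r) * μ ^ (-r) - r * (μ ^ (-r - 1) * u)
      ≤ (1+r) * (1 / (1 + r) * u ^ (-r) + r / (1 + r) * (μ ^ (-r - 1) * u))
        - r * (μ ^ (-r-1) * u) := by linarith
    _ = u ^ (-r) := by field_simp; ring

lemma jensen {n : ℕ} (v y : Fin n → ℝ) (hv : ∀ i, 0 < v i) (hy : ∀ i, 0 ≤ y i)
    (hsum : ∑ i, y i = 1) {r : ℝ} (hr : 0 < r) {μ : ℝ} (hμ : μ = ∑ i, y i * v i)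
    (hμpos : 0 < μ) : μ ^ (-r) ≤ ∑ i, y i * v i ^ (-r) := by
  have step : ∀ i, y i * ((1 + r) * μ ^ (-r) - r * (μ ^ (-r - 1) * v i)) ≤ y i * v i ^ (-r) :=
    fun i => mul_le_mul_of_nonneg_left (tangent (hv i) hμpos hr) (hy i)
  have hsum2 := Finset.sum_le_sum (fun i (_ : i ∈ Finset.univ) => step i)
  have lhs_eq : ∑ i, y i * ((1 + r) * μ ^ (-r) - r * (μ ^ (-r - 1) * v i)) = μ ^ (-r) := by
    have expand : ∀ i, y i * ((1 + r) * μ ^ (-r) - r * (μ ^ (-r - 1) * v i))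
        = (1 + r) * μ ^ (-r) * y i - r * μ ^ (-r - 1) * (y i * v i) := fun i => by ring
    rw [Finset.sum_congr rfl (fun i _ => expand i), Finset.sum_sub_distrib,
      ← Finset.mul_sum, ← Finset.mul_sum, hsum, ← hμ]
    have : μ ^ (-r - 1) * μ = μ ^ (-r) := by
      rw [← Real.rpow_add_one hμpos.ne' (-r-1)]; ring_nf
    rw [mul_one, mul_assoc, this]; ring
  linarith [hsum2, lhs_eq.symm.le, lhs_eq.le]

lemma maxbound {μ q : ℝ} (h0 : 0 < μ) (h1 : μ < 1) (hq : 0 < q) :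
    (1 - μ) * μ ^ q ≤ q ^ q / (q + 1) ^ (q + 1) := by
  have hq1 : (0:ℝ) < q + 1 := by linarith
  have h1μ : (0:ℝ) ≤ 1 - μ := by linarith
  have key := Real.geom_mean_le_arith_mean2_weighted
    (w₁ := q/(q+1)) (w₂ := 1/(q+1)) (p₁ := μ*(q+1)/q) (p₂ := (1-μ)*(q+1))
    (by positivity) (by positivity) (by positivity) (by positivity) (by field_simp)
  have ram : q/(q+1) * (μ*(q+1)/q) + 1/(q+1) * ((1-μ)*(q+1)) = 1 := by field_simp; ring
  rw [ram] at key
  have key2 : ((μ*(q+1)/q) ^ (q/(q+1)) * ((1-μ)*(q+1)) ^ ((1:ℝ)/(q+1))) ^ (q+1) ≤ 1 := by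
    calc _ ≤ (1:ℝ) ^ (q+1) := Real.rpow_le_rpow (by positivity) key hq1.le
    _ = 1 := Real.one_rpow _
  have hexp : ((μ*(q+1)/q) ^ (q/(q+1)) * ((1-μ)*(q+1)) ^ ((1:ℝ)/(q+1))) ^ (q+1)
      = (μ*(q+1)/q) ^ q * ((1-μ)*(q+1)) := by
    rw [Real.mul_rpow (Real.rpow_nonneg (by positivity) _) (Real.rpow_nonneg (by positivity) _),
      ← Real.rpow_mul (by positivity), ← Real.rpow_mul (by positivity)]
    congr 1
    · congr 1; field_simp
    · rw [show (1:ℝ)/(q+1) * (q+1) = 1 by field_simp, Real.rpow_one]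
  rw [hexp] at key2
  have hp1 : (μ*(q+1)/q) ^ q = μ ^ q * (q+1) ^ q / q ^ q := by
    rw [Real.div_rpow (by positivity) hq.le, Real.mul_rpow h0.le hq1.le]
  rw [hp1] at key2
  have hqq : (0:ℝ) < q ^ q := Real.rpow_pos_of_pos hq q
  have hq1q : (0:ℝ) < (q+1) ^ q := Real.rpow_pos_of_pos hq1 q
  have hq11 : (q+1:ℝ) ^ (q+1) = (q+1) ^ q * (q+1) := by
    rw [Real.rpow_add_one hq1.ne' q]
  rw [le_div_iff₀ (by rw [hq11]; positivity)]
  have expand : (1 - μ) * μ ^ q * (q + 1) ^ (q + 1)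
      = (μ ^ q * (q+1) ^ q / q ^ q * ((1-μ)*(q+1))) * q ^ q := by
    rw [hq11]; field_simp
  rw [expand]
  calc (μ ^ q * (q+1) ^ q / q ^ q * ((1-μ)*(q+1))) * q ^ q ≤ 1 * q ^ q :=
        mul_le_mul_of_nonneg_right key2 hqq.le
    _ = q ^ q := one_mul _

lemma core {n : ℕ} (v y : Fin n → ℝ) (hv : ∀ i, 0 < v i) (hy : ∀ i, 0 ≤ y i)
    (hsum : ∑ i, y i = 1) {L r q : ℝ} (hL : 0 ≤ L) (hr : 0 < r) (hq : 0 < q) (hqr : q ≤ r)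
    (h : ∑ i, y i * v i + L * ∑ i, y i * v i ^ (-r) < 1) :
    L < q ^ q / (q + 1) ^ (q + 1) := by
  set μ := ∑ i, y i * v i with hμ
  have hμpos : 0 < μ := by
    have hex : ∃ i, 0 < y i := by
      by_contra hc
      push_neg at hc
      have : ∑ i, y i ≤ 0 := Finset.sum_nonpos (fun i _ => hc i)
      linarith
    obtain ⟨i, hi⟩ := hex
    exact Finset.sum_pos' (fun j _ => mul_nonneg (hy j) (hv j).le)
      ⟨i, Finset.mem_univ i, mul_pos hi (hv i)⟩
  have hJ : μ ^ (-r) ≤ ∑ i, y i * v i ^ (-r) := jensen v y hv hy hsum hr hμ hμpos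
  have hJ0 : (0:ℝ) < μ ^ (-r) := Real.rpow_pos_of_pos hμpos _
  have hμ1 : μ < 1 := by nlinarith [mul_nonneg hL (le_of_lt hJ0)]
  have h2 : μ + L * μ ^ (-r) < 1 := by nlinarith
  have h3 : L * μ ^ (-r) < 1 - μ := by linarith
  have hinv : μ ^ (-r) * μ ^ r = 1 := by
    rw [← Real.rpow_add hμpos]; simp
  have h4 : L < (1 - μ) * μ ^ r := by
    have := mul_lt_mul_of_pos_right h3 (Real.rpow_pos_of_pos hμpos r)
    rw [mul_assoc, hinv, mul_one] at this
    linarith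
  have h5 : μ ^ r ≤ μ ^ q := Real.rpow_le_rpow_of_exponent_ge hμpos hμ1.le hqr
  have h6 : (1 - μ) * μ ^ r ≤ (1 - μ) * μ ^ q :=
    mul_le_mul_of_nonneg_left h5 (by linarith)
  exact lt_of_lt_of_le h4 (h6.trans (maxbound hμpos hμ1 hq))

/-! ### Quadratic-form lemmas -/

variable {n : ℕ}

/-- weights of a vector w.r.t. the eigenbasis of a Hermitian matrix -/
noncomputable def wt {X : Matrix (Fin n) (Fin n) ℂ} (hX : X.IsHermitian)
    (x : Fin n → ℂ) (i : Fin n) : ℝ :=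
  Complex.normSq ((star x ᵥ* (hX.eigenvectorUnitary : Matrix (Fin n) (Fin n) ℂ)) i)

lemma wt_nonneg {X : Matrix (Fin n) (Fin n) ℂ} (hX : X.IsHermitian)
    (x : Fin n → ℂ) (i : Fin n) : 0 ≤ wt hX x i := Complex.normSq_nonneg _

lemma conj_vecMul {X : Matrix (Fin n) (Fin n) ℂ} (hX : X.IsHermitian) (x : Fin n → ℂ)
    (i : Fin n) :
    ((hX.eigenvectorUnitary : Matrix (Fin n) (Fin n) ℂ)ᴴ *ᵥ x) i
      = star ((star x ᵥ* (hX.eigenvectorUnitary : Matrix (Fin n) (Fin n) ℂ)) i) := by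
  simp [Matrix.mulVec, Matrix.vecMul, dotProduct, Matrix.conjTranspose_apply,
    mul_comm]

lemma quadform {X : Matrix (Fin n) (Fin n) ℂ} (hX : X.IsHermitian) (r : ℝ) (x : Fin n → ℂ) :
    star x ⬝ᵥ hrpow X r *ᵥ x = ((∑ i, wt hX x i * hX.eigenvalues i ^ r : ℝ) : ℂ) := by
  set U := (hX.eigenvectorUnitary : Matrix (Fin n) (Fin n) ℂ) with hU
  have : hrpow X r = U * Matrix.diagonal (fun i => ((hX.eigenvalues i ^ r : ℝ) : ℂ)) * Uᴴ := by
    rw [hrpow, dif_pos hX]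
  rw [this, ← Matrix.mulVec_mulVec, ← Matrix.mulVec_mulVec, Matrix.dotProduct_mulVec]
  have hdiag : Matrix.diagonal (fun i => ((hX.eigenvalues i ^ r : ℝ) : ℂ)) *ᵥ (Uᴴ *ᵥ x)
      = fun i => ((hX.eigenvalues i ^ r : ℝ) : ℂ) * (Uᴴ *ᵥ x) i := by
    ext i; simp [Matrix.mulVec_diagonal]
  rw [hdiag]
  simp only [dotProduct]
  push_cast
  refine Finset.sum_congr rfl fun i _ => ?_
  rw [conj_vecMul hX x i,
    show ∀ a b : ℂ, a * (b * star a) = b * (a * star a) from fun a b => by ring]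
  simp only [Complex.star_def, Complex.mul_conj, wt]
  ring

lemma wtsum {X : Matrix (Fin n) (Fin n) ℂ} (hX : X.IsHermitian) (x : Fin n → ℂ) :
    ∑ i, wt hX x i = ∑ i, Complex.normSq (x i) := by
  set U := (hX.eigenvectorUnitary : Matrix (Fin n) (Fin n) ℂ) with hU
  have key : ((∑ i, wt hX x i : ℝ) : ℂ) = ((∑ i, Complex.normSq (x i) : ℝ) : ℂ) := by
    push_cast
    calc ∑ i, ((Complex.normSq ((star x ᵥ* U) i) : ℝ) : ℂ)
        = ∑ i, (star x ᵥ* U) i * ((Uᴴ *ᵥ x) i) := by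
          refine Finset.sum_congr rfl fun i _ => ?_
          rw [conj_vecMul hX x i]
          simp only [Complex.star_def, Complex.mul_conj]
          exact (Complex.mul_conj _).symm
      _ = (star x ᵥ* U) ⬝ᵥ (Uᴴ *ᵥ x) := rfl
      _ = star x ⬝ᵥ (U * Uᴴ) *ᵥ x := by
          rw [Matrix.dotProduct_mulVec, Matrix.dotProduct_mulVec, Matrix.vecMul_vecMul]
      _ = star x ⬝ᵥ x := by
          rw [← Matrix.star_eq_conjTranspose,
            (Matrix.mem_unitaryGroup_iff).mp hX.eigenvectorUnitary.2, Matrix.one_mulVec]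
      _ = ∑ i, (Complex.normSq (x i) : ℂ) := by
          refine Finset.sum_congr rfl fun i _ => ?_
          simp only [Pi.star_apply, Complex.star_def]
          rw [mul_comm, Complex.mul_conj]
  exact_mod_cast key

lemma hrpow_one {X : Matrix (Fin n) (Fin n) ℂ} (hX : X.IsHermitian) : hrpow X 1 = X := by
  rw [hrpow, dif_pos hX]
  have : (fun i => ((hX.eigenvalues i ^ (1:ℝ) : ℝ) : ℂ)) = RCLike.ofReal ∘ hX.eigenvalues := by
    ext i; simp [Real.rpow_one]
  rw [this, ← Matrix.star_eq_conjTranspose]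
  conv_rhs => rw [hX.spectral_theorem]
  rw [Unitary.conjStarAlgAut_apply]

lemma sand (x : Fin n → ℂ) (M C : Matrix (Fin n) (Fin n) ℂ) :
    star x ⬝ᵥ (Cᴴ * M * C) *ᵥ x = star (C *ᵥ x) ⬝ᵥ M *ᵥ (C *ᵥ x) := by
  rw [Matrix.star_mulVec, ← Matrix.mulVec_mulVec, ← Matrix.mulVec_mulVec,
    Matrix.dotProduct_mulVec]

/-! ### Main eigenvalue bound -/

lemma eigbound {s t p : ℝ} (hs : 0 < s) (ht : 0 < t)
    {A B Q X : Matrix (Fin n) (Fin n) ℂ} (hB : IsUnit B)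
    (hQ : Q.IsHermitian) (hk : lamMax Q ≤ 1) (hX : X.PosDef)
    (heq : hrpow X s + Aᴴ * hrpow X (-t) * A + Bᴴ * hrpow X (-p) * B = Q)
    {q : ℝ} (hq0 : 0 < q) (hqle : q ≤ t / s)
    {lam : ℂ} (hlam : lam ∈ spectrum ℂ A) :
    ‖lam‖ ^ 2 < q ^ q / (q + 1) ^ (q + 1) := by
  classical
  -- eigenvector
  rw [spectrum.mem_iff] at hlam
  have hdet : (algebraMap ℂ (Matrix (Fin n) (Fin n) ℂ) lam - A).det = 0 := by
    by_contra hd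
    exact hlam ((Matrix.isUnit_iff_isUnit_det _).mpr (isUnit_iff_ne_zero.mpr hd))
  obtain ⟨x, hx0, hxe⟩ := Matrix.exists_mulVec_eq_zero_iff.mpr hdet
  have hAx : A *ᵥ x = lam • x := by
    rw [Matrix.sub_mulVec, Algebra.algebraMap_eq_smul_one, Matrix.smul_mulVec,
      Matrix.one_mulVec, sub_eq_zero] at hxe
    exact hxe.symm
  have hBx : B *ᵥ x ≠ 0 := by
    intro h0
    apply hx0
    calc x = ((↑hB.unit⁻¹ : Matrix (Fin n) (Fin n) ℂ) * B) *ᵥ x := by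
          rw [IsUnit.val_inv_mul, Matrix.one_mulVec]
      _ = (↑hB.unit⁻¹ : Matrix (Fin n) (Fin n) ℂ) *ᵥ (B *ᵥ x) := by
          rw [Matrix.mulVec_mulVec]
      _ = 0 := by rw [h0, Matrix.mulVec_zero]
  set he := hX.1 with hhe
  set e := he.eigenvalues with hee
  have epos : ∀ i, 0 < e i := hX.eigenvalues_pos
  -- quadratic forms
  have H := congrArg (fun M => star x ⬝ᵥ M *ᵥ x) heq
  simp only [Matrix.add_mulVec, dotProduct_add] at H
  have T1 : star x ⬝ᵥ hrpow X s *ᵥ x = ((∑ i, wt he x i * e i ^ s : ℝ) : ℂ) := quadform he s x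
  have T2 : star x ⬝ᵥ (Aᴴ * hrpow X (-t) * A) *ᵥ x
      = ((Complex.normSq lam : ℝ) : ℂ) * ((∑ i, wt he x i * e i ^ (-t) : ℝ) : ℂ) := by
    rw [sand, hAx, star_smul, Matrix.mulVec_smul, smul_dotProduct,
      dotProduct_smul, quadform he (-t) x, smul_eq_mul, smul_eq_mul, ← mul_assoc,
      mul_comm (star lam) lam, Complex.star_def, Complex.mul_conj]
  have T3 : star x ⬝ᵥ (Bᴴ * hrpow X (-p) * B) *ᵥ x
      = ((∑ i, wt he (B *ᵥ x) i * e i ^ (-p) : ℝ) : ℂ) := by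
    rw [sand, quadform he (-p) (B *ᵥ x)]
  have TQ : star x ⬝ᵥ Q *ᵥ x = ((∑ i, wt hQ x i * hQ.eigenvalues i : ℝ) : ℂ) := by
    have h := quadform hQ 1 x
    rw [hrpow_one hQ] at h
    simpa only [Real.rpow_one] using h
  rw [T1, T2, T3, TQ] at H
  have Hr : (∑ i, wt he x i * e i ^ s) + Complex.normSq lam * (∑ i, wt he x i * e i ^ (-t))
      + (∑ i, wt he (B *ᵥ x) i * e i ^ (-p)) = ∑ i, wt hQ x i * hQ.eigenvalues i := by
    exact_mod_cast H
  -- real estimates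
  set S := ∑ i, Complex.normSq (x i) with hS
  have hSpos : 0 < S := by
    obtain ⟨i, hi⟩ := Function.ne_iff.mp hx0
    exact Finset.sum_pos' (fun j _ => Complex.normSq_nonneg _)
      ⟨i, Finset.mem_univ i, Complex.normSq_pos.mpr hi⟩
  have hQle : ∑ i, wt hQ x i * hQ.eigenvalues i ≤ S := by
    have hev : ∀ i, hQ.eigenvalues i ≤ 1 := by
      intro i
      refine le_trans (le_ciSup (Set.Finite.bddAbove (Set.finite_range _)) i) ?_
      rwa [lamMax, dif_pos hQ] at hk
    calc ∑ i, wt hQ x i * hQ.eigenvalues i ≤ ∑ i, wt hQ x i * 1 :=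
          Finset.sum_le_sum fun i _ => mul_le_mul_of_nonneg_left (hev i) (wt_nonneg hQ x i)
      _ = S := by simp only [mul_one]; rw [wtsum hQ x]
  have hT3pos : 0 < ∑ i, wt he (B *ᵥ x) i * e i ^ (-p) := by
    have hpos : 0 < ∑ i, wt he (B *ᵥ x) i := by
      rw [wtsum he]
      obtain ⟨i, hi⟩ := Function.ne_iff.mp hBx
      exact Finset.sum_pos' (fun j _ => Complex.normSq_nonneg _)
        ⟨i, Finset.mem_univ i, Complex.normSq_pos.mpr hi⟩
    obtain ⟨i, hi⟩ : ∃ i, 0 < wt he (B *ᵥ x) i := by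
      by_contra hc
      push_neg at hc
      have : ∑ i, wt he (B *ᵥ x) i ≤ 0 := Finset.sum_nonpos (fun i _ => hc i)
      linarith
    exact Finset.sum_pos'
      (fun j _ => mul_nonneg (wt_nonneg he _ j) (Real.rpow_nonneg (epos j).le _))
      ⟨i, Finset.mem_univ i, mul_pos hi (Real.rpow_pos_of_pos (epos i) _)⟩
  have main : (∑ i, wt he x i * e i ^ s)
      + Complex.normSq lam * (∑ i, wt he x i * e i ^ (-t)) < S := by linarith
  -- apply core
  have hwx : ∑ i, wt he x i = S := by rw [wtsum he x]
  have hys : ∑ i, wt he x i / S = 1 := by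
    rw [← Finset.sum_div, hwx, div_self hSpos.ne']
  have hr : 0 < t / s := div_pos ht hs
  have hvt : ∀ i, (e i ^ s) ^ (-(t/s)) = e i ^ (-t) := by
    intro i
    rw [← Real.rpow_mul (epos i).le]
    congr 1
    field_simp
  have hsum1 : ∑ i, (wt he x i / S) * (e i ^ s) = (∑ i, wt he x i * e i ^ s) / S := by
    rw [Finset.sum_div]
    exact Finset.sum_congr rfl fun i _ => by ring
  have hsum2 : ∑ i, (wt he x i / S) * (e i ^ s) ^ (-(t/s))
      = (∑ i, wt he x i * e i ^ (-t)) / S := by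
    rw [Finset.sum_div]
    refine Finset.sum_congr rfl fun i _ => ?_
    rw [hvt i]; ring
  have hcore := core (fun i => e i ^ s) (fun i => wt he x i / S)
    (fun i => Real.rpow_pos_of_pos (epos i) s)
    (fun i => div_nonneg (wt_nonneg he x i) hSpos.le) hys
    (Complex.normSq_nonneg lam) hr hq0 hqle ?_
  · rw [show ‖lam‖ ^ 2 = Complex.normSq lam by
      rw [Complex.sq_norm]]
    exact hcore
  · rw [hsum1, hsum2,
      show (∑ i, wt he x i * e i ^ s) / S
          + Complex.normSq lam * ((∑ i, wt he x i * e i ^ (-t)) / S)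
        = ((∑ i, wt he x i * e i ^ s)
          + Complex.normSq lam * (∑ i, wt he x i * e i ^ (-t))) / S by ring,
      div_lt_one hSpos]
    exact main

/-! ### Spectral radius bound -/

lemma specRad_lt {n : ℕ} (hn : 0 < n) (A : Matrix (Fin n) (Fin n) ℂ) {C : ℝ}
    (h : ∀ lam ∈ spectrum ℂ A, ‖lam‖ ^ 2 < C) : specRad A ^ 2 < C := by
  haveI : NeZero n := ⟨hn.ne'⟩
  have hne : (spectrum ℂ A).Nonempty := by
    obtain ⟨c, hc⟩ := Module.End.exists_eigenvalue
      ((Matrix.toLinAlgEquiv (Pi.basisFun ℂ (Fin n))) A)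
    exact ⟨c, by
      rw [← AlgEquiv.spectrum_eq (Matrix.toLinAlgEquiv (Pi.basisFun ℂ (Fin n)))]
      exact hc.mem_spectrum⟩
  have hfin := Matrix.finite_spectrum (R := ℂ) A
  obtain ⟨lam0, hmem, hmax⟩ := Finset.exists_max_image hfin.toFinset (fun z => ‖z‖)
    (by rwa [Set.Finite.toFinset_nonempty])
  have hmem' : lam0 ∈ spectrum ℂ A := hfin.mem_toFinset.mp hmem
  have hrad : spectralRadius ℂ A = ((‖lam0‖₊ : NNReal) : ENNReal) := by
    apply le_antisymm
    · refine iSup₂_le fun k hk => ?_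
      exact_mod_cast hmax k (hfin.mem_toFinset.mpr hk)
    · exact le_iSup₂ (f := fun k (_ : k ∈ spectrum ℂ A) => ((‖k‖₊ : NNReal) : ENNReal))
        lam0 hmem'
  rw [specRad, hrad, ENNReal.coe_toReal, coe_nnnorm]
  exact h lam0 hmem'

end StmtAux

theorem stmt1 {n : ℕ} (hn : 0 < n) (s t p : ℝ) (hs : 1 ≤ s) (ht : 1 ≤ t) (hp : 1 ≤ p)
    (A B Q : Matrix (Fin n) (Fin n) ℂ) (hA : IsUnit A) (hB : IsUnit B) (hQ : Q.PosDef)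
    (hk : lamMax Q ≤ 1) (q : ℝ) (hq : q = min (t / s) (p / s))
    (hsol : ∃ X : Matrix (Fin n) (Fin n) ℂ, X.PosDef ∧
      hrpow X s + Aᴴ * hrpow X (-t) * A + Bᴴ * hrpow X (-p) * B = Q) :
    specRad A ^ 2 < q ^ q / (q + 1) ^ (q + 1) ∧
    specRad B ^ 2 < q ^ q / (q + 1) ^ (q + 1) := by
  obtain ⟨X, hX, heq⟩ := hsol
  have hs0 : (0:ℝ) < s := lt_of_lt_of_le one_pos hs
  have ht0 : (0:ℝ) < t := lt_of_lt_of_le one_pos ht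
  have hp0 : (0:ℝ) < p := lt_of_lt_of_le one_pos hp
  have hq0 : 0 < q := by
    rw [hq]
    exact lt_min (div_pos ht0 hs0) (div_pos hp0 hs0)
  have heq' : hrpow X s + Bᴴ * hrpow X (-p) * B + Aᴴ * hrpow X (-t) * A = Q := by
    rw [← heq]; abel
  constructor
  · exact StmtAux.specRad_lt hn A fun lam hlam =>
      StmtAux.eigbound hs0 ht0 hB hQ.1 hk hX heq hq0 (hq ▸ min_le_left _ _) hlam
  · exact StmtAux.specRad_lt hn B fun lam hlam =>
      StmtAux.eigbound hs0 hp0 hA hQ.1 hk hX heq' hq0 (hq ▸ min_le_right _ _) hlam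
end

section
/- Let s, t, p ≥ 1 be real numbers, A, B invertible n×n complex matrices and Q an n×n Hermitian positive definite matrix with largest eigenvalue k = λ₁(Q) > 1. If there exists a Hermitian positive definite matrix X with X^s + A*X^{-t}A + B*X^{-p}B = Q, then ρ(A)² < q^q k^(1+q̃)/(q+1)^(q+1) and ρ(B)² < q^q k^(1+q̃)/(q+1)^(q+1), where q = min{t/s, p/s}, q̃ = max{t/s, p/s} and ρ(·) denotes the spectral radius. -/
open Matrix Filter
open scoped ComplexOrder

lemma my_amgm (τ k u : ℝ) (hτ : 0 < τ) (hu : 0 < u) (huk : u < k) :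
    (k - u) * u ^ τ ≤ τ ^ τ * k ^ (1 + τ) / (τ + 1) ^ (τ + 1) := by
  have hτ1 : (0:ℝ) < τ + 1 := by linarith
  have hk : 0 < k := lt_trans hu huk
  have hku : 0 < k - u := by linarith
  set w₁ := τ / (τ + 1) with hw₁
  set w₂ := 1 / (τ + 1) with hw₂
  set p₁ := u * (τ + 1) / τ with hp₁
  set p₂ := (k - u) * (τ + 1) with hp₂
  have hp₁0 : 0 < p₁ := by positivity
  have hp₂0 : 0 < p₂ := by positivity
  have hsum : w₁ + w₂ = 1 := by
    rw [hw₁, hw₂, ← add_div, div_self (ne_of_gt hτ1)]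
  have h1 : p₁ ^ w₁ * p₂ ^ w₂ ≤ w₁ * p₁ + w₂ * p₂ :=
    Real.geom_mean_le_arith_mean2_weighted (by positivity) (by positivity)
      hp₁0.le hp₂0.le hsum
  have h2 : w₁ * p₁ + w₂ * p₂ = k := by
    rw [hw₁, hw₂, hp₁, hp₂]; field_simp; ring
  rw [h2] at h1
  have h3 : (p₁ ^ w₁ * p₂ ^ w₂) ^ (τ + 1) ≤ k ^ (τ + 1) :=
    Real.rpow_le_rpow (by positivity) h1 hτ1.le
  have h4 : (p₁ ^ w₁ * p₂ ^ w₂) ^ (τ + 1) = p₁ ^ τ * p₂ := by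
    rw [Real.mul_rpow (by positivity) (by positivity),
      ← Real.rpow_mul hp₁0.le, ← Real.rpow_mul hp₂0.le, hw₁, hw₂,
      div_mul_cancel₀ _ (ne_of_gt hτ1), one_div, inv_mul_cancel₀ (ne_of_gt hτ1),
      Real.rpow_one]
  rw [h4] at h3
  have h5 : p₁ ^ τ = u ^ τ * (τ + 1) ^ τ / τ ^ τ := by
    rw [hp₁, Real.div_rpow (by positivity) hτ.le, Real.mul_rpow hu.le hτ1.le]
  have h6 : (τ + 1) ^ (τ + 1) = (τ + 1) ^ τ * (τ + 1) := by
    rw [Real.rpow_add hτ1, Real.rpow_one]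
  have h7 : k ^ (1 + τ) = k ^ (τ + 1) := by rw [add_comm]
  have hττ : (0:ℝ) < τ ^ τ := Real.rpow_pos_of_pos hτ τ
  have hτ1τ : (0:ℝ) < (τ + 1) ^ τ := Real.rpow_pos_of_pos hτ1 τ
  rw [h7, h6, le_div_iff₀ (by positivity)]
  calc (k - u) * u ^ τ * ((τ + 1) ^ τ * (τ + 1)) = p₁ ^ τ * p₂ * τ ^ τ := by
        rw [h5, hp₂]; field_simp
    _ ≤ k ^ (τ + 1) * τ ^ τ := mul_le_mul_of_nonneg_right h3 hττ.le
    _ = τ ^ τ * k ^ (τ + 1) := by ring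


lemma my_h_mono (a b : ℝ) (ha : 0 < a) (hab : a ≤ b) :
    b ^ b / (b + 1) ^ (b + 1) ≤ a ^ a / (a + 1) ^ (a + 1) := by
  have hb : 0 < b := lt_of_lt_of_le ha hab
  have hb1 : (0:ℝ) < b + 1 := by linarith
  set u := b / (b + 1) with hu
  have hu0 : 0 < u := by positivity
  have hu1 : u < 1 := by rw [hu, div_lt_one hb1]; linarith
  have hid : (1 - u) * u ^ b = b ^ b / (b + 1) ^ (b + 1) := by
    have h1u : 1 - u = 1 / (b + 1) := by rw [hu]; field_simp; ring
    rw [h1u, hu, Real.div_rpow hb.le hb1.le,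
      Real.rpow_add hb1, Real.rpow_one]
    rw [div_mul_div_comm, one_mul, mul_comm (b + 1)]
  have h2 : (1 - u) * u ^ b ≤ (1 - u) * u ^ a :=
    mul_le_mul_of_nonneg_left (Real.rpow_le_rpow_of_exponent_ge hu0 hu1.le hab)
      (by linarith)
  have h3 : (1 - u) * u ^ a ≤ a ^ a * (1:ℝ) ^ (1 + a) / (a + 1) ^ (a + 1) :=
    my_amgm a 1 u ha hu0 hu1
  rw [Real.one_rpow, mul_one] at h3
  linarith [hid ▸ h2.trans h3]

lemma my_jensen {m : ℕ} (c u : Fin m → ℝ) (τ : ℝ) (hτ : 0 < τ)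
    (hc : ∀ i, 0 ≤ c i) (hc1 : ∑ i, c i = 1) (hu : ∀ i, 0 < u i) :
    (∑ i, c i * u i) ^ (-τ) ≤ ∑ i, c i * u i ^ (-τ) := by
  set G := ∏ i, u i ^ c i with hG
  have hG0 : 0 < G := Finset.prod_pos fun i _ => Real.rpow_pos_of_pos (hu i) _
  have hG1 : G ≤ ∑ i, c i * u i :=
    Real.geom_mean_le_arith_mean_weighted Finset.univ c u (fun i _ => hc i) hc1
      (fun i _ => (hu i).le)
  have hG2 : G ^ (-τ) ≤ ∑ i, c i * u i ^ (-τ) := by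
    have h := Real.geom_mean_le_arith_mean_weighted Finset.univ c (fun i => u i ^ (-τ))
      (fun i _ => hc i) hc1 (fun i _ => (Real.rpow_pos_of_pos (hu i) _).le)
    have heq : (∏ i, (u i ^ (-τ)) ^ c i) = G ^ (-τ) := by
      rw [hG, ← Real.finset_prod_rpow Finset.univ _
        (fun i _ => Real.rpow_nonneg (hu i).le _) (-τ)]
      apply Finset.prod_congr rfl
      intro i _
      rw [← Real.rpow_mul (hu i).le, mul_comm, Real.rpow_mul (hu i).le]
    rwa [heq] at h
  exact le_trans (Real.rpow_le_rpow_of_nonpos hG0 hG1 (by linarith)) hG2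

lemma qform_UDU {n : ℕ} (U : Matrix (Fin n) (Fin n) ℂ)
    (f : Fin n → ℝ) (x : Fin n → ℂ) :
    star x ⬝ᵥ (U * Matrix.diagonal (fun i => ((f i : ℝ) : ℂ)) * Uᴴ) *ᵥ x
      = ((∑ i, f i * ‖(Uᴴ *ᵥ x) i‖ ^ 2 : ℝ) : ℂ) := by
  set y := Uᴴ *ᵥ x with hy
  have h1 : (U * Matrix.diagonal (fun i => ((f i : ℝ) : ℂ)) * Uᴴ) *ᵥ x
      = U *ᵥ (Matrix.diagonal (fun i => ((f i : ℝ) : ℂ)) *ᵥ y) := by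
    rw [hy, mulVec_mulVec, mulVec_mulVec]
  rw [h1, dotProduct_mulVec]
  have h2 : star x ᵥ* U = star y := by
    rw [hy, star_mulVec, conjTranspose_conjTranspose]
  rw [h2]
  simp only [dotProduct, mulVec_diagonal, Pi.star_apply]
  push_cast
  apply Finset.sum_congr rfl
  intro i _
  rw [show star (y i) * (((f i : ℝ) : ℂ) * y i) = ((f i : ℝ) : ℂ) * (star (y i) * y i) by ring]
  congr 1
  simpa using RCLike.conj_mul (y i)

lemma dot_self_eq {n : ℕ} (x : Fin n → ℂ) :
    star x ⬝ᵥ x = ((∑ i, ‖x i‖ ^ 2 : ℝ) : ℂ) := by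
  simp only [dotProduct, Pi.star_apply]
  push_cast
  apply Finset.sum_congr rfl
  intro i _
  simpa using RCLike.conj_mul (x i)

lemma unitary_norm_eq {n : ℕ} (U : Matrix (Fin n) (Fin n) ℂ)
    (hU : U ∈ Matrix.unitaryGroup (Fin n) ℂ) (x : Fin n → ℂ) :
    ∑ i, ‖(Uᴴ *ᵥ x) i‖ ^ 2 = ∑ i, ‖x i‖ ^ 2 := by
  have h := qform_UDU U (fun _ => (1 : ℝ)) x
  have h2 : U * Matrix.diagonal (fun _ : Fin n => ((1 : ℝ) : ℂ)) * Uᴴ = 1 := by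
    simp only [Complex.ofReal_one, Matrix.diagonal_one, mul_one]
    exact (Matrix.mem_unitaryGroup_iff).mp hU
  rw [h2, one_mulVec, dot_self_eq] at h
  have := Complex.ofReal_inj.mp h.symm
  simpa using this

lemma exists_eigen {n : ℕ} (hn : 0 < n) (A : Matrix (Fin n) (Fin n) ℂ) :
    ∃ (μ : ℂ) (x : Fin n → ℂ), (∑ i, ‖x i‖ ^ 2 = 1) ∧ A *ᵥ x = μ • x ∧
      ‖μ‖ = specRad A := by
  haveI : NeZero n := ⟨hn.ne'⟩
  have hne : (spectrum ℂ A).Nonempty :=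
    spectrum.nonempty_of_isAlgClosed_of_finiteDimensional ℂ A
  have hfin : (spectrum ℂ A).Finite := Matrix.finite_spectrum A
  obtain ⟨μ, hμmem, hμmax⟩ := hfin.toFinset.exists_max_image (fun z => ‖z‖)
    (by rwa [← Set.Finite.toFinset_nonempty hfin] at hne)
  rw [Set.Finite.mem_toFinset] at hμmem
  have hrad : specRad A = ‖μ‖ := by
    have h1 : spectralRadius ℂ A = (‖μ‖₊ : ENNReal) := by
      apply le_antisymm
      · apply iSup₂_le
        intro z hz
        have : ‖z‖ ≤ ‖μ‖ := hμmax z (hfin.mem_toFinset.mpr hz)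
        exact_mod_cast this
      · exact le_iSup₂ (f := fun z (_ : z ∈ spectrum ℂ A) => (‖z‖₊ : ENNReal)) μ hμmem
    rw [specRad, h1, ENNReal.coe_toReal, coe_nnnorm]
  -- eigenvector
  have hdet : (algebraMap ℂ (Matrix (Fin n) (Fin n) ℂ) μ - A).det = 0 := by
    have := spectrum.mem_iff.mp hμmem
    by_contra hd
    exact this ((Matrix.isUnit_iff_isUnit_det _).mpr (isUnit_iff_ne_zero.mpr hd))
  obtain ⟨v, hv0, hveq⟩ := (Matrix.exists_mulVec_eq_zero_iff).mpr hdet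
  have heig : A *ᵥ v = μ • v := by
    have halg : algebraMap ℂ (Matrix (Fin n) (Fin n) ℂ) μ = μ • 1 :=
      Algebra.algebraMap_eq_smul_one μ
    rw [halg, Matrix.sub_mulVec, Matrix.smul_mulVec, one_mulVec] at hveq
    have := sub_eq_zero.mp hveq
    linear_combination (norm := module) this.symm
  -- normalize
  have hS : 0 < ∑ i, ‖v i‖ ^ 2 := by
    obtain ⟨j, hj⟩ := Function.ne_iff.mp hv0
    apply Finset.sum_pos' (fun i _ => by positivity)
    exact ⟨j, Finset.mem_univ j, pow_pos (norm_pos_iff.mpr hj) 2⟩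
  set S := ∑ i, ‖v i‖ ^ 2 with hSdef
  set c : ℂ := (((Real.sqrt S)⁻¹ : ℝ) : ℂ) with hc
  refine ⟨μ, c • v, ?_, ?_, hrad.symm⟩
  · have : ∀ i, ‖(c • v) i‖ ^ 2 = (Real.sqrt S)⁻¹ ^ 2 * ‖v i‖ ^ 2 := by
      intro i
      simp [hc, norm_smul, mul_pow, abs_of_nonneg (inv_nonneg.mpr (Real.sqrt_nonneg S))]
    rw [Finset.sum_congr rfl (fun i _ => this i), ← Finset.mul_sum, ← hSdef,
      inv_pow, Real.sq_sqrt hS.le, inv_mul_cancel₀ hS.ne']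
  · rw [Matrix.mulVec_smul, heig, smul_comm]

lemma hrpow_eq {n : ℕ} {X : Matrix (Fin n) (Fin n) ℂ} (hH : X.IsHermitian) (r : ℝ) :
    hrpow X r = (hH.eigenvectorUnitary : Matrix (Fin n) (Fin n) ℂ) *
      Matrix.diagonal (fun i => ((hH.eigenvalues i ^ r : ℝ) : ℂ)) *
      (hH.eigenvectorUnitary : Matrix (Fin n) (Fin n) ℂ)ᴴ := by
  rw [hrpow, dif_pos hH]

lemma qform_hrpow {n : ℕ} {X : Matrix (Fin n) (Fin n) ℂ} (hX : X.PosDef) (r : ℝ)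
    (x : Fin n → ℂ) :
    star x ⬝ᵥ hrpow X r *ᵥ x =
      ((∑ i, hX.1.eigenvalues i ^ r *
        ‖((hX.1.eigenvectorUnitary : Matrix (Fin n) (Fin n) ℂ)ᴴ *ᵥ x) i‖ ^ 2 : ℝ) : ℂ) := by
  rw [hrpow_eq hX.1, qform_UDU]

lemma unitary_vec_ne {n : ℕ} {U : Matrix (Fin n) (Fin n) ℂ}
    (hU : U ∈ Matrix.unitaryGroup (Fin n) ℂ) {x : Fin n → ℂ} (hx : x ≠ 0) :
    Uᴴ *ᵥ x ≠ 0 := by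
  intro h
  apply hx
  have : (U * star U) *ᵥ x = U *ᵥ (Uᴴ *ᵥ x) := (mulVec_mulVec _ _ _).symm
  rw [h, mulVec_zero, (Matrix.mem_unitaryGroup_iff).mp hU, one_mulVec] at this
  exact this

lemma hrpow_posDef {n : ℕ} {X : Matrix (Fin n) (Fin n) ℂ} (hX : X.PosDef) (r : ℝ) :
    (hrpow X r).PosDef := by
  rw [Matrix.posDef_iff_dotProduct_mulVec]
  constructor
  · rw [hrpow_eq hX.1]
    apply Matrix.isHermitian_mul_mul_conjTranspose
    apply Matrix.isHermitian_diagonal_of_self_adjoint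
    funext i
    simp [Pi.star_apply, ← Complex.ofReal_pow]
  · intro x hx
    rw [qform_hrpow hX r]
    rw [Complex.zero_lt_real]
    have hy := unitary_vec_ne hX.1.eigenvectorUnitary.prop hx
    obtain ⟨j, hj⟩ := Function.ne_iff.mp hy
    apply Finset.sum_pos'
    · intro i _
      have := Real.rpow_pos_of_pos (hX.eigenvalues_pos i) r
      positivity
    · exact ⟨j, Finset.mem_univ j,
        mul_pos (Real.rpow_pos_of_pos (hX.eigenvalues_pos j) r)
          (pow_pos (norm_pos_iff.mpr hj) 2)⟩

lemma qform_conj {n : ℕ} (M B : Matrix (Fin n) (Fin n) ℂ) (x : Fin n → ℂ) :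
    star x ⬝ᵥ (Bᴴ * M * B) *ᵥ x = star (B *ᵥ x) ⬝ᵥ M *ᵥ (B *ᵥ x) := by
  rw [← mulVec_mulVec, ← mulVec_mulVec, dotProduct_mulVec, ← star_mulVec]

lemma posDef_conj {n : ℕ} {M B : Matrix (Fin n) (Fin n) ℂ} (hM : M.PosDef)
    (hB : IsUnit B) : (Bᴴ * M * B).PosDef := by
  rw [Matrix.posDef_iff_dotProduct_mulVec]
  constructor
  · exact Matrix.isHermitian_conjTranspose_mul_mul B hM.1
  · intro x hx
    rw [qform_conj]
    apply hM.dotProduct_mulVec_pos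
    intro h
    apply hx
    have := congrArg (fun v => B⁻¹ *ᵥ v) h
    simpa [mulVec_mulVec, Matrix.nonsing_inv_mul B ((Matrix.isUnit_iff_isUnit_det B).mp hB)]
      using this

lemma qform_Q_le {n : ℕ} (hn : 0 < n) {Q : Matrix (Fin n) (Fin n) ℂ} (hQ : Q.PosDef)
    (x : Fin n → ℂ) (hx1 : ∑ i, ‖x i‖ ^ 2 = 1) :
    ∃ qQ : ℝ, star x ⬝ᵥ Q *ᵥ x = (qQ : ℂ) ∧ qQ ≤ lamMax Q := by
  haveI : Nonempty (Fin n) := ⟨⟨0, hn⟩⟩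
  set U := (hQ.1.eigenvectorUnitary : Matrix (Fin n) (Fin n) ℂ) with hU
  set ev := hQ.1.eigenvalues with hev
  have hdec : Q = U * Matrix.diagonal (fun i => ((ev i : ℝ) : ℂ)) * Uᴴ := by
    convert hQ.1.spectral_theorem using 2
    rw [Unitary.conjStarAlgAut_apply]; rfl
  set y := Uᴴ *ᵥ x with hy
  refine ⟨∑ i, ev i * ‖y i‖ ^ 2, ?_, ?_⟩
  · conv_lhs => rw [hdec]
    rw [qform_UDU]
  · have hcsum : ∑ i, ‖y i‖ ^ 2 = 1 := by
      rw [hy, hU, unitary_norm_eq _ hQ.1.eigenvectorUnitary.prop x, hx1]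
    have hbd : ∀ i, ev i ≤ lamMax Q := by
      intro i
      rw [lamMax, dif_pos hQ.1]
      exact le_ciSup (Set.Finite.bddAbove (Set.finite_range _)) i
    calc ∑ i, ev i * ‖y i‖ ^ 2 ≤ ∑ i, lamMax Q * ‖y i‖ ^ 2 := by
          apply Finset.sum_le_sum
          intro i _
          exact mul_le_mul_of_nonneg_right (hbd i) (by positivity)
      _ = lamMax Q := by rw [← Finset.mul_sum, hcsum, mul_one]

lemma my_key {n : ℕ} (hn : 0 < n) (s t k : ℝ) (hs : 1 ≤ s) (ht : 1 ≤ t)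
    (A C Q X : Matrix (Fin n) (Fin n) ℂ)
    (hX : X.PosDef) (hQ : Q.PosDef) (hC : C.PosDef) (hk : k = lamMax Q)
    (heq : hrpow X s + Aᴴ * hrpow X (-t) * A + C = Q) :
    specRad A ^ 2 < (t/s) ^ (t/s) * k ^ (1 + t/s) / (t/s + 1) ^ (t/s + 1) := by
  have hs0 : 0 < s := lt_of_lt_of_le one_pos hs
  have ht0 : 0 < t := lt_of_lt_of_le one_pos ht
  set τ := t / s with hτdef
  have hτ : 0 < τ := div_pos ht0 hs0
  obtain ⟨μ, x, hx1, heig, hμ⟩ := exists_eigen hn A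
  have hx0 : x ≠ 0 := by
    intro h
    rw [h] at hx1
    simp at hx1
  set d := hX.1.eigenvalues with hd
  set U := (hX.1.eigenvectorUnitary : Matrix (Fin n) (Fin n) ℂ) with hUdef
  set y := Uᴴ *ᵥ x with hy
  set c : Fin n → ℝ := fun i => ‖y i‖ ^ 2 with hc
  have hcsum : ∑ i, c i = 1 := by
    rw [hc]
    rw [hy, hUdef, unitary_norm_eq _ hX.1.eigenvectorUnitary.prop x, hx1]
  have hc0 : ∀ i, 0 ≤ c i := fun i => by positivity
  have hd0 : ∀ i, 0 < d i := hX.eigenvalues_pos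
  set α := ∑ i, c i * (d i ^ s) with hα
  set β := ∑ i, c i * ((d i ^ s) ^ (-τ)) with hβ
  have hqs : star x ⬝ᵥ hrpow X s *ᵥ x = (α : ℂ) := by
    rw [qform_hrpow hX s x, hα]
    norm_cast
    exact Finset.sum_congr rfl fun i _ => mul_comm _ _
  have hqt : star x ⬝ᵥ hrpow X (-t) *ᵥ x = (β : ℂ) := by
    rw [qform_hrpow hX (-t) x, hβ]
    norm_cast
    apply Finset.sum_congr rfl
    intro i _
    rw [mul_comm]
    congr 1
    rw [← Real.rpow_mul (hd0 i).le]
    congr 1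
    rw [hτdef]
    field_simp
  have hAq : star x ⬝ᵥ (Aᴴ * hrpow X (-t) * A) *ᵥ x = ((‖μ‖ ^ 2 : ℝ) : ℂ) * (β : ℂ) := by
    rw [qform_conj, heig]
    rw [Matrix.mulVec_smul]
    rw [star_smul, smul_dotProduct, dotProduct_smul]
    rw [hqt]
    rw [smul_eq_mul, smul_eq_mul, ← mul_assoc]
    congr 1
    simpa using RCLike.conj_mul μ
  obtain ⟨qQ, hqQ, hqQle⟩ := qform_Q_le hn hQ x hx1
  have hsum : (α : ℂ) + ((‖μ‖ ^ 2 : ℝ) : ℂ) * (β : ℂ) + star x ⬝ᵥ C *ᵥ x = (qQ : ℂ) := by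
    have h := congrArg (fun M => star x ⬝ᵥ M *ᵥ x) heq
    simp only [Matrix.add_mulVec, dotProduct_add] at h
    rw [hqs, hAq, hqQ] at h
    exact h
  set γ := qQ - α - ‖μ‖ ^ 2 * β with hγdef
  have hCx : star x ⬝ᵥ C *ᵥ x = (γ : ℂ) := by
    rw [hγdef]
    have hsum' := hsum
    push_cast at hsum' ⊢
    linear_combination hsum' 
  have hγ0 : 0 < γ := by
    have := hC.dotProduct_mulVec_pos hx0
    rw [hCx] at this
    exact Complex.zero_lt_real.mp this
  have hreal : α + ‖μ‖ ^ 2 * β + γ = qQ := by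
    have h5 : ((α + ‖μ‖ ^ 2 * β + γ : ℝ) : ℂ) = (qQ : ℂ) := by
      have hsum' := hsum
      rw [hCx] at hsum'
      push_cast at hsum' ⊢
      linear_combination hsum'
    exact_mod_cast h5
  have hα0 : 0 < α := by
    obtain ⟨j, -, hj⟩ := Finset.exists_ne_zero_of_sum_ne_zero (hcsum.trans_ne one_ne_zero)
    apply Finset.sum_pos'
    · intro i _
      exact mul_nonneg (hc0 i) (Real.rpow_pos_of_pos (hd0 i) s).le
    · exact ⟨j, Finset.mem_univ j,
        mul_pos (lt_of_le_of_ne (hc0 j) (Ne.symm hj)) (Real.rpow_pos_of_pos (hd0 j) s)⟩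
  have hβα : α ^ (-τ) ≤ β :=
    my_jensen c (fun i => d i ^ s) τ hτ hc0 hcsum (fun i => Real.rpow_pos_of_pos (hd0 i) s)
  have hβ0 : 0 < β := lt_of_lt_of_le (Real.rpow_pos_of_pos hα0 _) hβα
  have hk' : qQ ≤ k := by rw [hk]; exact hqQle
  have hμβ : ‖μ‖ ^ 2 * β < k - α := by nlinarith
  have hαk : α < k := by nlinarith [mul_nonneg (sq_nonneg ‖μ‖) hβ0.le]
  have h1 : ‖μ‖ ^ 2 * α ^ (-τ) ≤ ‖μ‖ ^ 2 * β :=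
    mul_le_mul_of_nonneg_left hβα (by positivity)
  have h2 : ‖μ‖ ^ 2 * α ^ (-τ) < k - α := lt_of_le_of_lt h1 hμβ
  have hατατ : α ^ (-τ) * α ^ τ = 1 := by
    rw [← Real.rpow_add hα0]
    simp
  have h3 : ‖μ‖ ^ 2 < (k - α) * α ^ τ := by
    have hh := mul_lt_mul_of_pos_right h2 (Real.rpow_pos_of_pos hα0 τ)
    calc ‖μ‖ ^ 2 = ‖μ‖ ^ 2 * α ^ (-τ) * α ^ τ := by rw [mul_assoc, hατατ, mul_one]
      _ < (k - α) * α ^ τ := hh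
  have h4 := my_amgm τ k α hτ hα0 hαk
  rw [← hμ]
  exact lt_of_lt_of_le h3 h4

lemma final_mono (q qt τ k : ℝ) (hq0 : 0 < q) (h1 : q ≤ τ) (h2 : τ ≤ qt) (hk : 1 ≤ k) :
    τ ^ τ * k ^ (1 + τ) / (τ + 1) ^ (τ + 1) ≤ q ^ q * k ^ (1 + qt) / (q + 1) ^ (q + 1) := by
  have hτ0 : 0 < τ := hq0.trans_le h1
  have hk1 : k ^ (1 + τ) ≤ k ^ (1 + qt) := Real.rpow_le_rpow_of_exponent_le hk (by linarith)
  have hh := my_h_mono q τ hq0 h1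
  calc τ ^ τ * k ^ (1 + τ) / (τ + 1) ^ (τ + 1)
      = (τ ^ τ / (τ + 1) ^ (τ + 1)) * k ^ (1 + τ) := by ring
    _ ≤ (q ^ q / (q + 1) ^ (q + 1)) * k ^ (1 + qt) := by
        apply mul_le_mul hh hk1 (by positivity) (by positivity)
    _ = q ^ q * k ^ (1 + qt) / (q + 1) ^ (q + 1) := by ring


theorem stmt2 {n : ℕ} (hn : 0 < n) (s t p : ℝ) (hs : 1 ≤ s) (ht : 1 ≤ t) (hp : 1 ≤ p)
    (A B Q : Matrix (Fin n) (Fin n) ℂ) (hA : IsUnit A) (hB : IsUnit B) (hQ : Q.PosDef)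
    (k : ℝ) (hk : k = lamMax Q) (hk1 : 1 < k)
    (q qt : ℝ) (hq : q = min (t / s) (p / s)) (hqt : qt = max (t / s) (p / s))
    (hsol : ∃ X : Matrix (Fin n) (Fin n) ℂ, X.PosDef ∧
      hrpow X s + Aᴴ * hrpow X (-t) * A + Bᴴ * hrpow X (-p) * B = Q) :
    specRad A ^ 2 < q ^ q * k ^ (1 + qt) / (q + 1) ^ (q + 1) ∧
    specRad B ^ 2 < q ^ q * k ^ (1 + qt) / (q + 1) ^ (q + 1) := by
  obtain ⟨X, hX, heqX⟩ := hsol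
  have hq0 : 0 < q := by
    rw [hq]
    exact lt_min (div_pos (lt_of_lt_of_le one_pos ht) (lt_of_lt_of_le one_pos hs))
      (div_pos (lt_of_lt_of_le one_pos hp) (lt_of_lt_of_le one_pos hs))
  have hCB : (Bᴴ * hrpow X (-p) * B).PosDef := posDef_conj (hrpow_posDef hX (-p)) hB
  have hCA : (Aᴴ * hrpow X (-t) * A).PosDef := posDef_conj (hrpow_posDef hX (-t)) hA
  have hτA := my_key hn s t k hs ht A (Bᴴ * hrpow X (-p) * B) Q X hX hQ hCB hk heqX
  have heqB : hrpow X s + Bᴴ * hrpow X (-p) * B + Aᴴ * hrpow X (-t) * A = Q := by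
    rw [← heqX]; abel
  have hτB := my_key hn s p k hs hp B (Aᴴ * hrpow X (-t) * A) Q X hX hQ hCA hk heqB
  constructor
  · refine lt_of_lt_of_le hτA (final_mono q qt (t / s) k hq0 ?_ ?_ hk1.le)
    · rw [hq]; exact min_le_left _ _
    · rw [hqt]; exact le_max_left _ _
  · refine lt_of_lt_of_le hτB (final_mono q qt (p / s) k hq0 ?_ ?_ hk1.le)
    · rw [hq]; exact min_le_right _ _
    · rw [hqt]; exact le_max_right _ _
end

section
/- Let s, t, p ≥ 1 be real numbers, A, B invertible n×n complex matrices and Q an n×n Hermitian positive definite matrix. If X is a Hermitian positive definite matrix with X^s + A*X^{-t}A + B*X^{-p}B = Q, then cI ≤ X ≤ Q^(1/s), where c = max{λₙ(AQ⁻¹A*)^(1/t), λₙ(BQ⁻¹B*)^(1/p)}. -/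
open Matrix Filter
open scoped ComplexOrder

namespace LHaux


noncomputable def spc {X : Matrix (Fin n) (Fin n) ℂ} (hX : X.IsHermitian) (d : Fin n → ℝ) :
    Matrix (Fin n) (Fin n) ℂ :=
  (hX.eigenvectorUnitary : Matrix (Fin n) (Fin n) ℂ) *
    Matrix.diagonal (fun i => (d i : ℂ)) *
    (hX.eigenvectorUnitary : Matrix (Fin n) (Fin n) ℂ)ᴴ

variable {X : Matrix (Fin n) (Fin n) ℂ} (hX : X.IsHermitian) (d e : Fin n → ℝ)

lemma U_mul_Uh : (hX.eigenvectorUnitary : Matrix (Fin n) (Fin n) ℂ) *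
    (hX.eigenvectorUnitary : Matrix (Fin n) (Fin n) ℂ)ᴴ = 1 := by
  rw [← Matrix.star_eq_conjTranspose]
  exact (Unitary.mem_iff.mp hX.eigenvectorUnitary.2).2

lemma Uh_mul_U : (hX.eigenvectorUnitary : Matrix (Fin n) (Fin n) ℂ)ᴴ *
    (hX.eigenvectorUnitary : Matrix (Fin n) (Fin n) ℂ) = 1 := by
  rw [← Matrix.star_eq_conjTranspose]
  exact (Unitary.mem_iff.mp hX.eigenvectorUnitary.2).1

lemma spc_mul : spc hX d * spc hX e = spc hX (fun i => d i * e i) := by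
  unfold spc
  simp only [Matrix.mul_assoc]
  rw [← Matrix.mul_assoc ((hX.eigenvectorUnitary : Matrix (Fin n) (Fin n) ℂ)ᴴ), Uh_mul_U hX,
    Matrix.one_mul, ← Matrix.mul_assoc (Matrix.diagonal _), Matrix.diagonal_mul_diagonal]
  norm_cast

lemma spc_sub : spc hX d - spc hX e = spc hX (fun i => d i - e i) := by
  unfold spc
  rw [← Matrix.sub_mul, ← Matrix.mul_sub, Matrix.diagonal_sub]
  norm_cast

lemma spc_const (c : ℝ) : spc hX (fun _ => c) = (c : ℂ) • 1 := by
  unfold spc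
  rw [show Matrix.diagonal (fun _ : Fin n => (c : ℂ)) = (c : ℂ) • 1 by
      ext i j; by_cases h : i = j <;> simp [Matrix.diagonal_apply, Matrix.one_apply, h]]
  rw [Matrix.mul_smul, Matrix.smul_mul, Matrix.mul_one, U_mul_Uh hX]

lemma spc_eigen : spc hX hX.eigenvalues = X := by
  conv_rhs => rw [hX.spectral_theorem]
  rfl

lemma spc_herm : (spc hX d).IsHermitian :=
  Matrix.isHermitian_mul_mul_conjTranspose _ (Matrix.isHermitian_diagonal_iff.mpr
    (fun i => Complex.conj_ofReal (d i)))


lemma spc_qf (x : Fin n → ℂ) :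
    star x ⬝ᵥ (spc hX d *ᵥ x) =
      ((∑ k, d k * Complex.normSq
        (((hX.eigenvectorUnitary : Matrix (Fin n) (Fin n) ℂ)ᴴ *ᵥ x) k) : ℝ) : ℂ) := by
  set U := (hX.eigenvectorUnitary : Matrix (Fin n) (Fin n) ℂ) with hU
  set y := Uᴴ *ᵥ x with hy
  have h1 : spc hX d *ᵥ x = U *ᵥ (Matrix.diagonal (fun i => (d i : ℂ)) *ᵥ y) := by
    unfold spc; rw [Matrix.mulVec_mulVec, Matrix.mulVec_mulVec, ← hU]
  have h2 : star x ᵥ* U = star y := by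
    rw [hy, Matrix.star_mulVec, Matrix.conjTranspose_conjTranspose]
  rw [h1, Matrix.dotProduct_mulVec (star x) U, h2, Complex.ofReal_sum]
  simp only [dotProduct, Matrix.mulVec_diagonal, Pi.star_apply]
  refine Finset.sum_congr rfl fun k _ => ?_
  rw [Complex.ofReal_mul, Complex.star_def, show (Complex.normSq (y k) : ℂ)
    = (starRingEnd ℂ) (y k) * y k from Complex.normSq_eq_conj_mul_self]
  ring

lemma spc_psd_iff : (spc hX d).PosSemidef ↔ ∀ i, 0 ≤ d i := by
  constructor
  · intro h i
    have h2 := h.dotProduct_mulVec_nonneg ((hX.eigenvectorUnitary : Matrix (Fin n) (Fin n) ℂ) *ᵥ (Pi.single i 1 : Fin n → ℂ))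
    rw [spc_qf] at h2
    rw [Matrix.mulVec_mulVec, Uh_mul_U hX, Matrix.one_mulVec] at h2
    have : (∑ k, d k * Complex.normSq ((Pi.single i 1 : Fin n → ℂ) k)) = d i := by
      rw [Finset.sum_eq_single i]
      · simp
      · intro b _ hb; simp [Pi.single_apply, hb]
      · simp
    rw [this] at h2
    exact Complex.zero_le_real.mp h2
  · intro h
    have hd : Matrix.PosSemidef (Matrix.diagonal (fun i => (d i : ℂ))) :=
      Matrix.PosSemidef.diagonal fun i => Complex.zero_le_real.mpr (h i)
    exact hd.mul_mul_conjTranspose_same _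

lemma spc_pd (h : ∀ i, 0 < d i) : (spc hX d).PosDef := by
  refine Matrix.PosDef.of_dotProduct_mulVec_pos (spc_herm hX d) fun x hx => ?_
  rw [spc_qf]
  set U := (hX.eigenvectorUnitary : Matrix (Fin n) (Fin n) ℂ) with hU
  set y := Uᴴ *ᵥ x with hy
  have hy0 : y ≠ 0 := by
    intro h0
    apply hx
    have : (U * Uᴴ) *ᵥ x = x := by rw [U_mul_Uh hX, Matrix.one_mulVec]
    rw [← this, ← Matrix.mulVec_mulVec, ← hy, h0, Matrix.mulVec_zero]
  obtain ⟨k, hk⟩ : ∃ k, y k ≠ 0 := by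
    by_contra hc; push_neg at hc; exact hy0 (funext hc)
  rw [Complex.zero_lt_real]
  refine Finset.sum_pos' (fun j _ => mul_nonneg (h j).le (Complex.normSq_nonneg _)) ⟨k,
    Finset.mem_univ k, mul_pos (h k) (Complex.normSq_pos.mpr hk)⟩

lemma lle_spc_iff : lle (spc hX d) (spc hX e) ↔ ∀ i, d i ≤ e i := by
  unfold lle
  rw [spc_sub hX e d, spc_psd_iff]
  exact forall_congr' fun i => by rw [sub_nonneg]


section S3
variable {n : ℕ} {X : Matrix (Fin n) (Fin n) ℂ}

lemma hrpow_eq (hX : X.IsHermitian) (r : ℝ) :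
    hrpow X r = spc hX (fun i => hX.eigenvalues i ^ r) := by
  unfold hrpow spc; rw [dif_pos hX]

lemma hrpow_herm (hX : X.IsHermitian) (r : ℝ) : (hrpow X r).IsHermitian := by
  rw [hrpow_eq hX]; exact spc_herm hX _

lemma hrpow_pd (hX : X.PosDef) (r : ℝ) : (hrpow X r).PosDef := by
  rw [hrpow_eq hX.1]; exact spc_pd _ _ (fun i => Real.rpow_pos_of_pos (hX.eigenvalues_pos i) r)

lemma hrpow_mul_hrpow (hX : X.PosDef) (r r' : ℝ) :
    hrpow X r * hrpow X r' = hrpow X (r + r') := by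
  rw [hrpow_eq hX.1 r, hrpow_eq hX.1 r', hrpow_eq hX.1 (r + r'), spc_mul]
  exact congrArg (spc hX.1) (funext fun i => (Real.rpow_add (hX.eigenvalues_pos i) r r').symm)

lemma hrpow_zero (hX : X.IsHermitian) : hrpow X 0 = 1 := by
  rw [hrpow_eq hX,
    show (fun i => hX.eigenvalues i ^ (0 : ℝ)) = fun _ => (1 : ℝ) from
      funext fun i => Real.rpow_zero _, spc_const hX 1]
  simp

lemma hrpow_one (hX : X.IsHermitian) : hrpow X 1 = X := by
  rw [hrpow_eq hX,
    show (fun i => hX.eigenvalues i ^ (1 : ℝ)) = hX.eigenvalues from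
      funext fun i => Real.rpow_one _, spc_eigen]

lemma hrpow_inv (hX : X.PosDef) (r : ℝ) : (hrpow X r)⁻¹ = hrpow X (-r) :=
  Matrix.inv_eq_right_inv (by rw [hrpow_mul_hrpow hX, add_neg_cancel, hrpow_zero hX.1])

lemma continuousOn_of_finite {s : Set ℝ} (hs : s.Finite) (f : ℝ → ℝ) : ContinuousOn f s := by
  have : Finite s := hs.to_subtype
  exact continuousOn_iff_continuous_restrict.mpr continuous_of_discreteTopology

lemma hrpow_eq_cfc (hX : X.IsHermitian) (r : ℝ) : hrpow X r = cfc (fun x : ℝ => x ^ r) X := by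
  rw [Matrix.IsHermitian.cfc_eq hX]
  unfold hrpow Matrix.IsHermitian.cfc
  rw [dif_pos hX, Unitary.conjStarAlgAut_apply, Matrix.star_eq_conjTranspose]
  rfl

lemma hrpow_hrpow (hX : X.PosDef) {r : ℝ} (hr : r ≠ 0) : hrpow (hrpow X r) (1 / r) = X := by
  have hsp : ∀ x ∈ spectrum ℝ X, 0 < x := by
    rw [hX.1.spectrum_real_eq_range_eigenvalues]
    rintro x ⟨i, rfl⟩; exact hX.eigenvalues_pos i
  have hXsa : IsSelfAdjoint X := hX.1
  rw [hrpow_eq_cfc hX.1 r, hrpow_eq_cfc (by rw [← hrpow_eq_cfc hX.1]; exact hrpow_herm hX.1 r) (1/r),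
    ← cfc_comp (fun x : ℝ => x ^ (1/r)) (fun x : ℝ => x ^ r) X hXsa
      (continuousOn_of_finite ((Matrix.finite_real_spectrum (A := X)).image _) _)
      (continuousOn_of_finite (Matrix.finite_real_spectrum (A := X)) _)]
  rw [cfc_congr (g := fun x : ℝ => x) (fun x hx => by
    simp only [Function.comp_apply, one_div]
    exact Real.rpow_rpow_inv (hsp x hx).le hr)]
  exact cfc_id' ℝ X

lemma lle_refl (M : Matrix (Fin n) (Fin n) ℂ) : lle M M := by
  unfold lle; rw [sub_self]; exact Matrix.PosSemidef.zero

lemma lle_trans {M N P : Matrix (Fin n) (Fin n) ℂ} (h1 : lle M N) (h2 : lle N P) : lle M P := by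
  unfold lle at *
  have := h2.add h1
  rwa [show P - N + (N - M) = P - M by abel] at this

lemma lle_conj {M N : Matrix (Fin n) (Fin n) ℂ} (h : lle M N) (C : Matrix (Fin n) (Fin n) ℂ) :
    lle (Cᴴ * M * C) (Cᴴ * N * C) := by
  unfold lle at *
  have := h.conjTranspose_mul_mul_same C
  convert this using 1
  noncomm_ring

lemma lle_smul_iff (hX : X.IsHermitian) (d : ℝ) :
    lle ((d : ℂ) • 1) X ↔ ∀ i, d ≤ hX.eigenvalues i := by
  have key : X - (d : ℂ) • 1 = spc hX (fun i => hX.eigenvalues i - d) :=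
    calc X - (d : ℂ) • 1 = spc hX hX.eigenvalues - spc hX (fun _ => d) := by
          rw [spc_eigen, spc_const]
      _ = _ := spc_sub hX _ _
  unfold lle
  rw [key, spc_psd_iff]
  exact forall_congr' fun i => by rw [sub_nonneg]

lemma smul_lle_iff (hX : X.IsHermitian) (d : ℝ) :
    lle X ((d : ℂ) • 1) ↔ ∀ i, hX.eigenvalues i ≤ d := by
  have key : (d : ℂ) • 1 - X = spc hX (fun i => d - hX.eigenvalues i) :=
    calc (d : ℂ) • 1 - X = spc hX (fun _ => d) - spc hX hX.eigenvalues := by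
          rw [spc_eigen, spc_const]
      _ = _ := spc_sub hX _ _
  unfold lle
  rw [key, spc_psd_iff]
  exact forall_congr' fun i => by rw [sub_nonneg]

end S3

section S4
variable {n : ℕ} {X : Matrix (Fin n) (Fin n) ℂ}

lemma smul_one_herm (c : ℝ) : ((c : ℂ) • (1 : Matrix (Fin n) (Fin n) ℂ)).IsHermitian := by
  rw [Matrix.IsHermitian, Matrix.conjTranspose_smul, Matrix.conjTranspose_one, Complex.star_def,
    Complex.conj_ofReal]

lemma smul_one_pd {c : ℝ} (hc : 0 < c) : ((c : ℂ) • (1 : Matrix (Fin n) (Fin n) ℂ)).PosDef := by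
  refine Matrix.PosDef.of_dotProduct_mulVec_pos (smul_one_herm c) fun x hx => ?_
  rw [Matrix.smul_mulVec, Matrix.one_mulVec, dotProduct_smul, smul_eq_mul]
  exact mul_pos (Complex.zero_lt_real.mpr hc) (dotProduct_star_self_pos_iff.mpr hx)

lemma eig_smul_one (hn : 0 < n) (c : ℝ)
    (h1 : ((c : ℂ) • (1 : Matrix (Fin n) (Fin n) ℂ)).IsHermitian) (i : Fin n) :
    h1.eigenvalues i = c := by
  have hne : Nonempty (Fin n) := ⟨⟨0, hn⟩⟩
  have halg : (c : ℂ) • (1 : Matrix (Fin n) (Fin n) ℂ) = algebraMap ℝ _ c := by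
    rw [Algebra.algebraMap_eq_smul_one]
    ext i j
    simp [Complex.real_smul]
  have hsp : spectrum ℝ ((c : ℂ) • (1 : Matrix (Fin n) (Fin n) ℂ)) = {c} := by
    rw [halg]; exact spectrum.scalar_eq c
  have := h1.eigenvalues_mem_spectrum_real i
  rw [hsp] at this
  exact this

lemma hrpow_smul_one (hn : 0 < n) (c r : ℝ) :
    hrpow ((c : ℂ) • 1) r = ((c ^ r : ℝ) : ℂ) • (1 : Matrix (Fin n) (Fin n) ℂ) := by
  have h1 := smul_one_herm (n := n) c
  rw [hrpow_eq h1, show (fun i => h1.eigenvalues i ^ r) = fun _ => c ^ r from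
    funext fun i => by rw [eig_smul_one hn c h1 i], spc_const]

lemma pd_conj {P C : Matrix (Fin n) (Fin n) ℂ} (hP : P.PosDef) (hC : IsUnit C) :
    (Cᴴ * P * C).PosDef := by
  refine Matrix.PosDef.of_dotProduct_mulVec_pos (Matrix.isHermitian_conjTranspose_mul_mul C hP.1) fun x hx => ?_
  have hx' : C *ᵥ x ≠ 0 := (Matrix.mulVec_injective_iff_isUnit.mpr hC |>.ne_iff' (by
    simp)).2 hx
  simpa only [Matrix.star_mulVec, Matrix.dotProduct_mulVec, Matrix.vecMul_vecMul] using
    hP.dotProduct_mulVec_pos hx'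

lemma lle_conj_herm {M N C : Matrix (Fin n) (Fin n) ℂ} (h : lle M N) (hC : C.IsHermitian) :
    lle (C * M * C) (C * N * C) := by
  have := lle_conj h C
  rwa [hC.eq] at this

lemma qf_le {M N : Matrix (Fin n) (Fin n) ℂ} (h : lle M N) (z : Fin n → ℂ) :
    star z ⬝ᵥ (M *ᵥ z) ≤ star z ⬝ᵥ (N *ᵥ z) := by
  have := h.dotProduct_mulVec_nonneg z
  rw [Matrix.sub_mulVec, dotProduct_sub] at this
  exact sub_nonneg.mp this

lemma dot_conj (C : Matrix (Fin n) (Fin n) ℂ) (z : Fin n → ℂ) :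
    star (C *ᵥ z) ⬝ᵥ (C *ᵥ z) = star z ⬝ᵥ ((Cᴴ * C) *ᵥ z) := by
  rw [Matrix.star_mulVec, ← Matrix.mulVec_mulVec, ← Matrix.dotProduct_mulVec]

lemma dot_star_self (z : Fin n → ℂ) :
    star z ⬝ᵥ z = ((∑ k, Complex.normSq (z k) : ℝ) : ℂ) := by
  rw [Complex.ofReal_sum]
  refine Finset.sum_congr rfl fun k _ => ?_
  rw [Pi.star_apply, Complex.star_def, show (Complex.normSq (z k) : ℂ)
    = (starRingEnd ℂ) (z k) * z k from Complex.normSq_eq_conj_mul_self]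

end S4

section S5
variable {n : ℕ} {X : Matrix (Fin n) (Fin n) ℂ}

lemma lle_one_iff (hX : X.IsHermitian) : lle X 1 ↔ ∀ i, hX.eigenvalues i ≤ 1 := by
  have := smul_lle_iff hX 1
  rwa [Complex.ofReal_one, one_smul] at this

lemma sum_normSq_pos {w : Fin n → ℂ} (hw : w ≠ 0) : 0 < ∑ k, Complex.normSq (w k) := by
  obtain ⟨k, hk⟩ : ∃ k, w k ≠ 0 := by
    by_contra hc; push_neg at hc; exact hw (funext hc)
  exact Finset.sum_pos' (fun j _ => Complex.normSq_nonneg _)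
    ⟨k, Finset.mem_univ k, Complex.normSq_pos.mpr hk⟩

lemma swap_lle_one {C : Matrix (Fin n) (Fin n) ℂ} (h : lle (C * Cᴴ) 1) : lle (Cᴴ * C) 1 := by
  have hP : (Cᴴ * C).PosSemidef := Matrix.posSemidef_conjTranspose_mul_self C
  rw [lle_one_iff hP.1]
  intro i
  set μ := hP.1.eigenvalues i with hμ
  rcases le_or_gt μ 0 with hle | hpos
  · linarith
  set v : Fin n → ℂ := ⇑(hP.1.eigenvectorBasis i) with hv
  have hMv : (Cᴴ * C) *ᵥ v = μ • v := hP.1.mulVec_eigenvectorBasis i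
  have hvne : v ≠ 0 := by
    intro h0
    exact hP.1.eigenvectorBasis.orthonormal.ne_zero i (by ext j; exact congrFun h0 j)
  set w := C *ᵥ v with hw
  have hwv : star v ⬝ᵥ ((Cᴴ * C) *ᵥ v) = (μ : ℂ) * (star v ⬝ᵥ v) := by
    rw [hMv, dotProduct_smul, Complex.real_smul]
  have hwne : w ≠ 0 := by
    intro h0
    have h1 : star v ⬝ᵥ ((Cᴴ * C) *ᵥ v) = 0 := by rw [← dot_conj, ← hw, h0]; simp
    rw [hwv] at h1
    have h2 : star v ⬝ᵥ v ≠ 0 := fun hz => hvne (dotProduct_star_self_eq_zero.mp hz)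
    exact (mul_ne_zero (Complex.ofReal_ne_zero.mpr hpos.ne') h2) h1
  have hCCw : (C * Cᴴ) *ᵥ w = μ • w := by
    rw [hw, Matrix.mulVec_mulVec, show C * Cᴴ * C = C * (Cᴴ * C) from Matrix.mul_assoc C Cᴴ C,
      ← Matrix.mulVec_mulVec, hMv, Matrix.mulVec_smul]
  have h1 := qf_le h w
  rw [Matrix.one_mulVec, hCCw, dotProduct_smul, Complex.real_smul, dot_star_self] at h1
  rw [← Complex.ofReal_mul] at h1
  have h2 : μ * (∑ k, Complex.normSq (w k)) ≤ ∑ k, Complex.normSq (w k) :=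
    Complex.real_le_real.mp h1
  nlinarith [sum_normSq_pos hwne]

lemma lle_inv {S T : Matrix (Fin n) (Fin n) ℂ} (hS : S.PosDef) (hT : T.PosDef) (h : lle S T) :
    lle T⁻¹ S⁻¹ := by
  set W := hrpow T (-(1/2) : ℝ) with hWdef
  have hWh : W.IsHermitian := hrpow_herm hT.1 _
  have hWpd : W.PosDef := hrpow_pd hT _
  set V := hrpow T (1/2 : ℝ) with hVdef
  have hWV : W * V = 1 := by
    rw [hWdef, hVdef, hrpow_mul_hrpow hT]; norm_num; exact hrpow_zero hT.1
  have hVW : V * W = 1 := by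
    rw [hWdef, hVdef, hrpow_mul_hrpow hT]; norm_num; exact hrpow_zero hT.1
  have hWinv : W⁻¹ = V := by rw [hWdef, hVdef, hrpow_inv hT, neg_neg]
  have hWTW : W * T * W = 1 := by
    calc W * T * W = hrpow T (-(1/2)) * hrpow T 1 * hrpow T (-(1/2)) := by rw [hrpow_one hT.1]
      _ = 1 := by
        rw [hrpow_mul_hrpow hT, hrpow_mul_hrpow hT]; norm_num; exact hrpow_zero hT.1
  set M := W * S * W with hM
  have hMpd : M.PosDef := by
    have := pd_conj hS hWpd.isUnit
    rwa [hWh.eq] at this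
  have hM1 : lle M 1 := by
    have := lle_conj_herm h hWh
    rwa [hWTW] at this
  have hTinv : T⁻¹ = hrpow T (-1 : ℝ) := by
    have := hrpow_inv hT 1
    rwa [hrpow_one hT.1] at this
  have hMinv : lle 1 M⁻¹ := by
    have heig : ∀ i, hMpd.1.eigenvalues i ≤ 1 := (lle_one_iff hMpd.1).mp hM1
    have hMi : M⁻¹ = spc hMpd.1 (fun i => hMpd.1.eigenvalues i ^ (-1 : ℝ)) := by
      have := hrpow_inv hMpd 1
      rw [hrpow_one hMpd.1] at this
      rw [this, hrpow_eq hMpd.1]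
    have h1 : (1 : Matrix (Fin n) (Fin n) ℂ) = spc hMpd.1 (fun _ => 1) := by
      rw [spc_const]; simp
    rw [hMi, h1, lle_spc_iff]
    intro i
    rw [Real.rpow_neg_one]
    exact (one_le_inv₀ (hMpd.eigenvalues_pos i)).mpr (heig i)
  have hMinv_eq : M⁻¹ = V * (S⁻¹ * V) := by
    rw [hM, Matrix.mul_inv_rev, Matrix.mul_inv_rev, hWinv]
  have hfin := lle_conj_herm hMinv hWh
  have e1 : W * 1 * W = T⁻¹ := by
    rw [Matrix.mul_one, hWdef, hrpow_mul_hrpow hT, hTinv]; norm_num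
  have e2 : W * M⁻¹ * W = S⁻¹ := by
    rw [hMinv_eq]
    simp only [Matrix.mul_assoc]
    rw [hVW, Matrix.mul_one, ← Matrix.mul_assoc, hWV, Matrix.one_mul]
  rwa [e1, e2] at hfin

end S5

section S6
variable {n : ℕ}

lemma furuta {X Y : Matrix (Fin n) (Fin n) ℂ} (hX : X.PosDef) (hY : Y.PosDef) {r s : ℝ}
    (hr : lle (hrpow X r) (hrpow Y r)) (hs : lle (hrpow X s) (hrpow Y s)) :
    lle (hrpow X ((r + s) / 2)) (hrpow Y ((r + s) / 2)) := by
  set q : ℝ := (r + s) / 2 with hq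
  set K := hrpow X (s/2) * hrpow Y (-(s/2)) with hK
  set L := hrpow Y (-(r/2)) * hrpow X (r/2) with hL
  have hKH : Kᴴ = hrpow Y (-(s/2)) * hrpow X (s/2) := by
    rw [hK, Matrix.conjTranspose_mul, (hrpow_herm hY.1 _).eq, (hrpow_herm hX.1 _).eq]
  have hLH : Lᴴ = hrpow X (r/2) * hrpow Y (-(r/2)) := by
    rw [hL, Matrix.conjTranspose_mul, (hrpow_herm hY.1 _).eq, (hrpow_herm hX.1 _).eq]
  have hKK1 : lle (Kᴴ * K) 1 := by
    have e : Kᴴ * K = hrpow Y (-(s/2)) * hrpow X s * hrpow Y (-(s/2)) := by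
      rw [hKH, hK]
      calc hrpow Y (-(s/2)) * hrpow X (s/2) * (hrpow X (s/2) * hrpow Y (-(s/2)))
          = hrpow Y (-(s/2)) * (hrpow X (s/2) * hrpow X (s/2)) * hrpow Y (-(s/2)) := by
            simp only [Matrix.mul_assoc]
        _ = _ := by rw [hrpow_mul_hrpow hX, show s/2 + s/2 = s by ring]
    have e2 : hrpow Y (-(s/2)) * hrpow Y s * hrpow Y (-(s/2)) = 1 := by
      rw [hrpow_mul_hrpow hY, hrpow_mul_hrpow hY, show -(s/2) + s + -(s/2) = 0 by ring,
        hrpow_zero hY.1]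
    have := lle_conj_herm hs (hrpow_herm hY.1 (-(s/2)))
    rwa [e2, ← e] at this
  have hLL1 : lle (L * Lᴴ) 1 := by
    have e : L * Lᴴ = hrpow Y (-(r/2)) * hrpow X r * hrpow Y (-(r/2)) := by
      rw [hLH, hL]
      calc hrpow Y (-(r/2)) * hrpow X (r/2) * (hrpow X (r/2) * hrpow Y (-(r/2)))
          = hrpow Y (-(r/2)) * (hrpow X (r/2) * hrpow X (r/2)) * hrpow Y (-(r/2)) := by
            simp only [Matrix.mul_assoc]
        _ = _ := by rw [hrpow_mul_hrpow hX, show r/2 + r/2 = r by ring]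
    have e2 : hrpow Y (-(r/2)) * hrpow Y r * hrpow Y (-(r/2)) = 1 := by
      rw [hrpow_mul_hrpow hY, hrpow_mul_hrpow hY, show -(r/2) + r + -(r/2) = 0 by ring,
        hrpow_zero hY.1]
    have := lle_conj_herm hr (hrpow_herm hY.1 (-(r/2)))
    rwa [e2, ← e] at this
  have hLHL : lle (Lᴴ * L) 1 := swap_lle_one hLL1
  set M := hrpow Y (-(q/2)) * hrpow X q * hrpow Y (-(q/2)) with hMdef
  have hMh : M.IsHermitian := by
    have h1 := Matrix.isHermitian_mul_mul_conjTranspose (hrpow Y (-(q/2))) (hrpow_herm hX.1 q)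
    rwa [(hrpow_herm hY.1 (-(q/2))).eq] at h1
  -- basic cancellation facts
  have cc1 : hrpow Y (q/2) * hrpow Y (-(q/2)) = 1 := by
    rw [hrpow_mul_hrpow hY, show q/2 + -(q/2) = 0 by ring, hrpow_zero hY.1]
  have cc2 : hrpow Y (-(q/2)) * hrpow Y (q/2) = 1 := by
    rw [hrpow_mul_hrpow hY, show -(q/2) + q/2 = 0 by ring, hrpow_zero hY.1]
  -- all eigenvalues of M are ≤ 1
  have heig : ∀ i, hMh.eigenvalues i ≤ 1 := by
    intro i
    set μ := hMh.eigenvalues i with hμ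
    rcases le_or_gt μ 0 with hle | hpos
    · linarith
    set v : Fin n → ℂ := ⇑(hMh.eigenvectorBasis i) with hv
    have hMv : M *ᵥ v = μ • v := hMh.mulVec_eigenvectorBasis i
    have hvne : v ≠ 0 := by
      intro h0
      exact hMh.eigenvectorBasis.orthonormal.ne_zero i (by ext j; exact congrFun h0 j)
    set w₁ := hrpow Y (q/2) *ᵥ v with hw₁
    have hw₁ne : w₁ ≠ 0 := by
      intro h0
      apply hvne
      have : (hrpow Y (-(q/2)) * hrpow Y (q/2)) *ᵥ v = v := by rw [cc2, Matrix.one_mulVec]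
      rw [← this, ← Matrix.mulVec_mulVec, ← hw₁, h0, Matrix.mulVec_zero]
    set P := K * hrpow Y (-(r/2)) with hPdef
    have eM : hrpow Y (q/2) * M = hrpow X q * hrpow Y (-(q/2)) := by
      rw [hMdef]
      simp only [← Matrix.mul_assoc]
      rw [cc1, Matrix.one_mul]
    have eSplit : hrpow X q * hrpow Y (-q) = hrpow X (r/2) * P := by
      rw [hPdef, hK]
      simp only [Matrix.mul_assoc]
      rw [hrpow_mul_hrpow hY, ← Matrix.mul_assoc, hrpow_mul_hrpow hX,
        show r/2 + s/2 = q by rw [hq]; ring, show -(s/2) + -(r/2) = -q by rw [hq]; ring]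
    have eN : (hrpow X q * hrpow Y (-q)) * hrpow Y (q/2) = hrpow X q * hrpow Y (-(q/2)) := by
      rw [Matrix.mul_assoc, hrpow_mul_hrpow hY, show -q + q/2 = -(q/2) by ring]
    have key1 : (hrpow X (r/2) * P) *ᵥ w₁ = μ • w₁ := by
      rw [← eSplit, hw₁, Matrix.mulVec_mulVec, eN, ← eM, ← Matrix.mulVec_mulVec, hMv,
        Matrix.mulVec_smul]
    have ePL : P * hrpow X (r/2) = K * L := by
      rw [hPdef, hL]; simp only [Matrix.mul_assoc]
    set w₂ := P *ᵥ w₁ with hw₂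
    have key2 : (K * L) *ᵥ w₂ = μ • w₂ := by
      rw [← ePL, hw₂, Matrix.mulVec_mulVec, show P * hrpow X (r/2) * P = P * (hrpow X (r/2) * P) by
        simp only [Matrix.mul_assoc], ← Matrix.mulVec_mulVec, key1, Matrix.mulVec_smul]
    have hw₂ne : w₂ ≠ 0 := by
      intro h0
      have h1 : hrpow X (r/2) *ᵥ w₂ = μ • w₁ := by
        rw [hw₂, Matrix.mulVec_mulVec, key1]
      rw [h0, Matrix.mulVec_zero] at h1
      have := smul_eq_zero.mp h1.symm
      rcases this with h2 | h2
      · exact hpos.ne' h2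
      · exact hw₁ne h2
    -- quadratic form chase
    have d3 : K *ᵥ (L *ᵥ w₂) = μ • w₂ := by rw [Matrix.mulVec_mulVec, key2]
    have d1 : star (K *ᵥ (L *ᵥ w₂)) ⬝ᵥ (K *ᵥ (L *ᵥ w₂)) ≤ star (L *ᵥ w₂) ⬝ᵥ (L *ᵥ w₂) := by
      rw [dot_conj K]
      have := qf_le hKK1 (L *ᵥ w₂)
      rwa [Matrix.one_mulVec] at this
    have d2 : star (L *ᵥ w₂) ⬝ᵥ (L *ᵥ w₂) ≤ star w₂ ⬝ᵥ w₂ := by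
      rw [dot_conj L]
      have := qf_le hLHL w₂
      rwa [Matrix.one_mulVec] at this
    have d4 : star (K *ᵥ (L *ᵥ w₂)) ⬝ᵥ (K *ᵥ (L *ᵥ w₂)) =
        ((μ * μ * ∑ k, Complex.normSq (w₂ k) : ℝ) : ℂ) := by
      rw [d3, star_smul, star_trivial, smul_dotProduct, dotProduct_smul,
        dot_star_self, Complex.real_smul, Complex.real_smul]
      push_cast
      ring
    have d5 : star w₂ ⬝ᵥ w₂ = ((∑ k, Complex.normSq (w₂ k) : ℝ) : ℂ) := dot_star_self w₂
    have dfin := le_trans d1 d2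
    rw [d4, d5] at dfin
    have hfin : μ * μ * (∑ k, Complex.normSq (w₂ k)) ≤ ∑ k, Complex.normSq (w₂ k) :=
      Complex.real_le_real.mp dfin
    have hρ := sum_normSq_pos hw₂ne
    have h2 : μ * μ ≤ 1 := by
      rcases le_or_gt (μ * μ) 1 with h | h
      · exact h
      · exfalso; nlinarith
    nlinarith
  have hM1 : lle M 1 := (lle_one_iff hMh).mpr heig
  have hfin := lle_conj_herm hM1 (hrpow_herm hY.1 (q/2))
  have e3 : hrpow Y (q/2) * M * hrpow Y (q/2) = hrpow X q := by
    rw [hMdef]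
    simp only [← Matrix.mul_assoc]
    rw [cc1, Matrix.one_mul, Matrix.mul_assoc, cc2, Matrix.mul_one]
  have e4 : hrpow Y (q/2) * 1 * hrpow Y (q/2) = hrpow Y q := by
    rw [Matrix.mul_one, hrpow_mul_hrpow hY, show q/2 + q/2 = q by ring]
  rwa [e3, e4] at hfin

end S6

section S7
variable {n : ℕ}

lemma dyadic {X Y : Matrix (Fin n) (Fin n) ℂ} (hX : X.PosDef) (hY : Y.PosDef) (h : lle X Y) :
    ∀ m k : ℕ, k ≤ 2 ^ m → lle (hrpow X ((k : ℝ) / 2 ^ m)) (hrpow Y ((k : ℝ) / 2 ^ m)) := by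
  intro m
  induction m with
  | zero =>
    intro k hk
    interval_cases k
    · rw [show ((0 : ℕ) : ℝ) / 2 ^ (0 : ℕ) = 0 by norm_num, hrpow_zero hX.1, hrpow_zero hY.1]
      exact lle_refl 1
    · rw [show ((1 : ℕ) : ℝ) / 2 ^ (0 : ℕ) = 1 by norm_num, hrpow_one hX.1, hrpow_one hY.1]
      exact h
  | succ m ih =>
    intro k hk
    have hps : (2 : ℕ) ^ (m + 1) = 2 * 2 ^ m := by rw [pow_succ]; ring
    rcases Nat.even_or_odd k with ⟨j, hj⟩ | ⟨j, hj⟩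
    · have hj2 : j ≤ 2 ^ m := by omega
      have e : ((k : ℝ)) / 2 ^ (m + 1) = (j : ℝ) / 2 ^ m := by
        subst hj; push_cast; rw [pow_succ]; field_simp; ring
      rw [e]; exact ih j hj2
    · have hple : j + 1 ≤ 2 ^ m := by omega
      have hjle : j ≤ 2 ^ m := by omega
      have e : ((k : ℝ)) / 2 ^ (m + 1) = ((j : ℝ) / 2 ^ m + ((j + 1 : ℕ) : ℝ) / 2 ^ m) / 2 := by
        subst hj; push_cast; rw [pow_succ]; field_simp; ring
      rw [e]; exact furuta hX hY (ih j hjle) (ih (j + 1) hple)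

theorem loewner_heinz {X Y : Matrix (Fin n) (Fin n) ℂ} (hX : X.PosDef) (hY : Y.PosDef)
    (h : lle X Y) {u : ℝ} (hu0 : 0 ≤ u) (hu1 : u ≤ 1) : lle (hrpow X u) (hrpow Y u) := by
  have h2pos : ∀ m : ℕ, (0 : ℝ) < 2 ^ m := fun m => pow_pos two_pos m
  set d : ℕ → ℝ := fun m => (⌊u * 2 ^ m⌋₊ : ℝ) / 2 ^ m with hd
  have hdm : ∀ m, lle (hrpow X (d m)) (hrpow Y (d m)) := by
    intro m
    apply dyadic hX hY h m
    have h1 : u * 2 ^ m ≤ 2 ^ m := by nlinarith [h2pos m]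
    calc ⌊u * 2 ^ m⌋₊ ≤ ⌊((2 ^ m : ℕ) : ℝ)⌋₊ := Nat.floor_le_floor (by push_cast; exact h1)
      _ = 2 ^ m := Nat.floor_natCast _
  have hub : ∀ m, d m ≤ u := fun m => by
    rw [hd, div_le_iff₀ (h2pos m)]
    exact Nat.floor_le (by positivity)
  have hlb : ∀ m, u - (1 / 2 : ℝ) ^ m ≤ d m := fun m => by
    have h1 : u * 2 ^ m < ⌊u * 2 ^ m⌋₊ + 1 := Nat.lt_floor_add_one _
    have hmul : (1 / 2 : ℝ) ^ m * 2 ^ m = 1 := by rw [← mul_pow]; norm_num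
    rw [hd, le_div_iff₀ (h2pos m)]
    nlinarith
  have hlow : Tendsto (fun m : ℕ => u - (1 / 2 : ℝ) ^ m) atTop (nhds u) := by
    have h12 : Tendsto (fun m : ℕ => (1 / 2 : ℝ) ^ m) atTop (nhds 0) :=
      tendsto_pow_atTop_nhds_zero_of_lt_one (by norm_num) (by norm_num)
    simpa using tendsto_const_nhds.sub h12
  have htend : Tendsto d atTop (nhds u) :=
    tendsto_of_tendsto_of_tendsto_of_le_of_le hlow tendsto_const_nhds hlb hub
  refine Matrix.PosSemidef.of_dotProduct_mulVec_nonneg ?_ ?_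
  · exact (hrpow_herm hY.1 u).sub (hrpow_herm hX.1 u)
  intro x
  set fX : ℝ → ℝ := fun w => ∑ k, hX.1.eigenvalues k ^ w *
    Complex.normSq (((hX.1.eigenvectorUnitary : Matrix (Fin n) (Fin n) ℂ)ᴴ *ᵥ x) k) with hfXd
  set fY : ℝ → ℝ := fun w => ∑ k, hY.1.eigenvalues k ^ w *
    Complex.normSq (((hY.1.eigenvectorUnitary : Matrix (Fin n) (Fin n) ℂ)ᴴ *ᵥ x) k) with hfYd
  have hfX : ∀ w, star x ⬝ᵥ (hrpow X w *ᵥ x) = ((fX w : ℝ) : ℂ) := fun w => by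
    rw [hrpow_eq hX.1, spc_qf]
  have hfY : ∀ w, star x ⬝ᵥ (hrpow Y w *ᵥ x) = ((fY w : ℝ) : ℂ) := fun w => by
    rw [hrpow_eq hY.1, spc_qf]
  have hcontX : Continuous fX := continuous_finset_sum _ fun k _ =>
    (continuous_iff_continuousAt.mpr fun b =>
      Real.continuousAt_const_rpow (hX.eigenvalues_pos k).ne').mul continuous_const
  have hcontY : Continuous fY := continuous_finset_sum _ fun k _ =>
    (continuous_iff_continuousAt.mpr fun b =>
      Real.continuousAt_const_rpow (hY.eigenvalues_pos k).ne').mul continuous_const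
  have hkey : ∀ w, star x ⬝ᵥ ((hrpow Y w - hrpow X w) *ᵥ x) = (((fY w - fX w : ℝ)) : ℂ) :=
    fun w => by
      rw [Matrix.sub_mulVec, dotProduct_sub, hfX, hfY, ← Complex.ofReal_sub]
  have hge : ∀ m, 0 ≤ fY (d m) - fX (d m) := fun m => by
    have h2 := (hdm m).dotProduct_mulVec_nonneg x
    rw [hkey] at h2
    exact Complex.zero_le_real.mp h2
  have hlim : Tendsto (fun m => fY (d m) - fX (d m)) atTop (nhds (fY u - fX u)) :=
    ((hcontY.sub hcontX).tendsto (u)).comp htend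
  have hfin : 0 ≤ fY u - fX u := ge_of_tendsto hlim (Filter.Eventually.of_forall hge)
  rw [hkey u]
  exact Complex.zero_le_real.mpr hfin

end S7

end LHaux

open LHaux in
theorem stmt5 {n : ℕ} (hn : 0 < n) (s t p : ℝ) (hs : 1 ≤ s) (ht : 1 ≤ t) (hp : 1 ≤ p)
    (A B Q : Matrix (Fin n) (Fin n) ℂ) (hA : IsUnit A) (hB : IsUnit B) (hQ : Q.PosDef)
    (c : ℝ) (hc : c = max (lamMin (A * Q⁻¹ * Aᴴ) ^ (1 / t)) (lamMin (B * Q⁻¹ * Bᴴ) ^ (1 / p)))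
    (X : Matrix (Fin n) (Fin n) ℂ) (hX : X.PosDef)
    (hsol : hrpow X s + Aᴴ * hrpow X (-t) * A + Bᴴ * hrpow X (-p) * B = Q) :
    lle (c • (1 : Matrix (Fin n) (Fin n) ℂ)) X ∧ lle X (hrpow Q (1 / s)) := by
  haveI : Nonempty (Fin n) := ⟨⟨0, hn⟩⟩
  have hs0 : (0 : ℝ) < s := lt_of_lt_of_le one_pos hs
  -- upper bound
  have hXs : lle (hrpow X s) Q := by
    unfold lle
    have e : Q - hrpow X s = Aᴴ * hrpow X (-t) * A + Bᴴ * hrpow X (-p) * B := by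
      rw [← hsol]; abel
    rw [e]
    exact ((hrpow_pd hX (-t)).posSemidef.conjTranspose_mul_mul_same A).add
      ((hrpow_pd hX (-p)).posSemidef.conjTranspose_mul_mul_same B)
  have hup : lle X (hrpow Q (1 / s)) := by
    have h1 := loewner_heinz (u := 1 / s) (hrpow_pd hX s) hQ hXs (by positivity)
      (by rw [div_le_one hs0]; linarith)
    rwa [hrpow_hrpow hX hs0.ne'] at h1
  -- generic lower bound
  have lower : ∀ (C : Matrix (Fin n) (Fin n) ℂ) (τ : ℝ), IsUnit C → 1 ≤ τ →
      lle (Cᴴ * hrpow X (-τ) * C) Q →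
      lle (((lamMin (C * Q⁻¹ * Cᴴ) ^ (1 / τ) : ℝ) : ℂ) • 1) X := by
    intro C τ hC hτ hlleQ
    have hτ0 : (0 : ℝ) < τ := lt_of_lt_of_le one_pos hτ
    have hCd : IsUnit C.det := (Matrix.isUnit_iff_isUnit_det C).mp hC
    have h2 := lle_conj hlleQ C⁻¹
    have hCC : C * C⁻¹ = 1 := Matrix.mul_nonsing_inv C hCd
    have hCiH : (C⁻¹)ᴴ * Cᴴ = 1 := by
      rw [← Matrix.conjTranspose_mul, hCC, Matrix.conjTranspose_one]
    have e1 : (C⁻¹)ᴴ * (Cᴴ * hrpow X (-τ) * C) * C⁻¹ = hrpow X (-τ) := by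
      simp only [← Matrix.mul_assoc]
      rw [hCiH, Matrix.one_mul, Matrix.mul_assoc, hCC, Matrix.mul_one]
    rw [e1] at h2
    set R := (C⁻¹)ᴴ * Q * C⁻¹ with hR
    have hRpd : R.PosDef := pd_conj hQ (Matrix.isUnit_nonsing_inv_iff.mpr hC)
    have h3 : lle R⁻¹ (hrpow X (-τ))⁻¹ := lle_inv (hrpow_pd hX _) hRpd h2
    have e2 : (hrpow X (-τ))⁻¹ = hrpow X τ := by rw [hrpow_inv hX, neg_neg]
    have e3 : R⁻¹ = C * Q⁻¹ * Cᴴ := by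
      rw [hR, Matrix.mul_inv_rev, Matrix.mul_inv_rev, Matrix.nonsing_inv_nonsing_inv C hCd,
        ← Matrix.conjTranspose_nonsing_inv, Matrix.nonsing_inv_nonsing_inv C hCd,
        Matrix.mul_assoc]
    rw [e2, e3] at h3
    set N := C * Q⁻¹ * Cᴴ with hN
    have hNpd : N.PosDef := by
      have h4 := pd_conj hQ.inv ((Matrix.isUnit_iff_isUnit_det Cᴴ).mpr
        (by rw [Matrix.det_conjTranspose]; exact hCd.star))
      rwa [Matrix.conjTranspose_conjTranspose] at h4
    have hcτ : lamMin N = ⨅ i, hNpd.1.eigenvalues i := by unfold lamMin; rw [dif_pos hNpd.1]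
    have hc0pos : 0 < lamMin N := by
      rw [hcτ]
      obtain ⟨i, hi⟩ := exists_eq_ciInf_of_finite (f := hNpd.1.eigenvalues)
      rw [← hi]
      exact hNpd.eigenvalues_pos i
    have h5 : lle (((lamMin N : ℝ) : ℂ) • 1) N := by
      rw [lle_smul_iff hNpd.1]
      intro i
      rw [hcτ]
      exact ciInf_le (Set.Finite.bddBelow (Set.finite_range _)) i
    have h6 : lle (((lamMin N : ℝ) : ℂ) • 1) (hrpow X τ) := lle_trans h5 h3
    have h7 := loewner_heinz (u := 1 / τ) (smul_one_pd hc0pos) (hrpow_pd hX τ) h6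
      (by positivity) (by rw [div_le_one hτ0]; linarith)
    rwa [hrpow_hrpow hX hτ0.ne', hrpow_smul_one hn] at h7
  have hQA : lle (Aᴴ * hrpow X (-t) * A) Q := by
    unfold lle
    have e : Q - Aᴴ * hrpow X (-t) * A = hrpow X s + Bᴴ * hrpow X (-p) * B := by
      rw [← hsol]; abel
    rw [e]
    exact (hrpow_pd hX s).posSemidef.add
      ((hrpow_pd hX (-p)).posSemidef.conjTranspose_mul_mul_same B)
  have hQB : lle (Bᴴ * hrpow X (-p) * B) Q := by
    unfold lle
    have e : Q - Bᴴ * hrpow X (-p) * B = hrpow X s + Aᴴ * hrpow X (-t) * A := by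
      rw [← hsol]; abel
    rw [e]
    exact (hrpow_pd hX s).posSemidef.add
      ((hrpow_pd hX (-t)).posSemidef.conjTranspose_mul_mul_same A)
  have lowA := lower A t hA ht hQA
  have lowB := lower B p hB hp hQB
  have hsm : ∀ x : ℝ, x • (1 : Matrix (Fin n) (Fin n) ℂ) = (x : ℂ) • 1 := fun x => by
    ext i j
    simp [Complex.real_smul]
  refine ⟨?_, hup⟩
  rw [hsm c, hc]
  rcases max_choice (lamMin (A * Q⁻¹ * Aᴴ) ^ (1 / t)) (lamMin (B * Q⁻¹ * Bᴴ) ^ (1 / p)) with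
    hm | hm <;> rw [hm]
  · exact lowA
  · exact lowB
end

section
/- Let s ≥ t ≥ p ≥ 1 be real numbers, A, B invertible n×n complex matrices and Q an n×n Hermitian positive definite matrix. Suppose there exists α with 0 < α ≤ λₙ(Q) such that α + α^(−t/s)‖A‖² + α^(−p/s)‖B‖² < λₙ(Q). Let β = λₙ(Q − α^(−t/s)A*A − α^(−p/s)B*B), and assume t β^(−t/s)‖A‖² + p β^(−p/s)‖B‖² < s β. Then the equation Y + A*Y^(−t/s)A + B*Y^(−p/s)B = Q has a unique Hermitian positive definite solution Ȳ with αI ≤ Ȳ ≤ Q. -/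
open Matrix Filter
open scoped ComplexOrder

/-!
On the order interval `[β, Q]` the map `G X = Q - A* X^(-t/s) A - B* X^(-p/s) B` is a contraction
for the spectral norm. For `0 < r ≤ 1` the map `x ↦ x^(-r)` is operator antitone (Löwner–Heinz),
so `Y ≤ X + ‖X - Y‖` gives `X^(-r) - Y^(-r) ≤ X^(-r) - (X + ‖X - Y‖)^(-r)`, a function of `X`
alone, which the scalar inequality `x^(-r) - (x + δ)^(-r) ≤ r β^(-r-1) δ` bounds. Hence `G` is
Lipschitz with constant `(t/s) β^(-t/s-1) ‖A‖² + (p/s) β^(-p/s-1) ‖B‖² < 1`. The choice of `β`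
makes `G` map `[α, Q]` into `[β, Q]`: Banach's fixed point theorem gives a solution, and any
solution in `[α, Q]` is a fixed point in `[β, Q]`, hence equal to it.
-/

open Set

lemma Real.rpow_neg_sub_rpow_neg_add_le {x δ r : ℝ} (hx : 0 < x) (hδ : 0 ≤ δ)
    (hr : r ∈ Icc (0 : ℝ) 1) : x ^ (-r) - (x + δ) ^ (-r) ≤ r * x ^ (-r - 1) * δ := by
  set s := δ / x
  have hs : 0 ≤ s := div_nonneg hδ hx.le
  have hbern : (1 + s) ^ r ≤ 1 + r * s :=
    rpow_one_add_le_one_add_mul_self (by linarith) hr.1 hr.2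
  have hpow : 0 < (1 + s) ^ r := Real.rpow_pos_of_pos (by linarith) r
  have hfactor : 1 - r * s ≤ (1 + s) ^ (-r) := by
    rw [Real.rpow_neg (by linarith), ← one_div, le_div_iff₀ hpow]
    rcases le_total 0 (1 - r * s) with h | h
    · nlinarith [mul_le_mul_of_nonneg_left hbern h, sq_nonneg (r * s)]
    · nlinarith [mul_nonpos_of_nonpos_of_nonneg h hpow.le]
  have hxs : x * s = δ := mul_div_cancel₀ δ hx.ne'
  have hxδ : (x + δ) ^ (-r) = x ^ (-r) * (1 + s) ^ (-r) := by
    rw [← Real.mul_rpow hx.le (by linarith), mul_one_add, hxs]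
  have hxr : x ^ (-r - 1) * δ = x ^ (-r) * s := by
    rw [Real.rpow_sub_one hx.ne', ← hxs]
    field_simp
  rw [hxδ, mul_assoc, hxr]
  nlinarith [Real.rpow_pos_of_pos hx (-r)]

namespace CFC

variable {𝒜 : Type*} [CStarAlgebra 𝒜] [PartialOrder 𝒜] [StarOrderedRing 𝒜]

lemma rpow_neg_le_rpow_neg {r : ℝ} (hr : r ∈ Ioc 0 1) {a b : 𝒜} (hab : a ≤ b)
    (ha : IsStrictlyPositive a := by cfc_tac) : b ^ (-r) ≤ a ^ (-r) := by
  have hb : IsStrictlyPositive b := ha.of_le hab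
  rw [show -r = r * (-1) by ring, ← rpow_rpow a r (-1) hr.1.ne', ← rpow_rpow b r (-1) hr.1.ne']
  exact CStarAlgebra.rpow_neg_one_le_rpow_neg_one (rpow_le_rpow ⟨hr.1.le, hr.2⟩ hab) (ha.rpow a r)

lemma le_spectrum_of_algebraMap_le {β : ℝ} {a : 𝒜} (ha : algebraMap ℝ 𝒜 β ≤ a) :
    ∀ x ∈ spectrum ℝ a, β ≤ x :=
  (algebraMap_le_iff_le_spectrum (ha := (IsSelfAdjoint.algebraMap 𝒜 (.all β)).of_ge ha)).1 ha

lemma rpow_neg_le_algebraMap {α r : ℝ} (hα : 0 < α) (hr : 0 ≤ r) {a : 𝒜}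
    (ha : algebraMap ℝ 𝒜 α ≤ a) : a ^ (-r) ≤ algebraMap ℝ 𝒜 (α ^ (-r)) := by
  have ha0 : 0 ≤ a := (isStrictlyPositive_algebraMap hα).nonneg.trans ha
  have hspec := le_spectrum_of_algebraMap_le ha
  have hcont : ContinuousOn (fun x : ℝ => x ^ (-r)) (spectrum ℝ a) :=
    continuousOn_id.rpow_const fun x hx => .inl (hα.trans_le (hspec x hx)).ne'
  rw [rpow_eq_cfc_real ha0, cfc_le_algebraMap_iff _ _ _ hcont]
  exact fun x hx => Real.rpow_le_rpow_of_nonpos hα (hspec x hx) (by linarith)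

lemma rpow_neg_sub_rpow_neg_le {β r : ℝ} (hβ : 0 < β) (hr : r ∈ Ioc 0 1) {a b : 𝒜}
    (ha : algebraMap ℝ 𝒜 β ≤ a) (hb : algebraMap ℝ 𝒜 β ≤ b) :
    a ^ (-r) - b ^ (-r) ≤ algebraMap ℝ 𝒜 (r * β ^ (-r - 1) * ‖a - b‖) := by
  set δ := ‖a - b‖
  have hβpos : IsStrictlyPositive (algebraMap ℝ 𝒜 β) := isStrictlyPositive_algebraMap hβ
  have ha0 : 0 ≤ a := hβpos.nonneg.trans ha
  have hspec := le_spectrum_of_algebraMap_le ha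
  have hspec_pos : ∀ x ∈ spectrum ℝ a, 0 < x := fun x hx => hβ.trans_le (hspec x hx)
  have hb_le : b ≤ a + algebraMap ℝ 𝒜 δ :=
    neg_le_sub_iff_le_add.1 ((IsSelfAdjoint.of_nonneg ha0).sub
      (IsSelfAdjoint.of_nonneg (hβpos.nonneg.trans hb))).neg_algebraMap_norm_le_self
  have hδ : 0 ≤ δ := norm_nonneg _
  have hshift : (a + algebraMap ℝ 𝒜 δ) ^ (-r) = cfc (fun x => (x + δ) ^ (-r)) a := by
    have hadd : a + algebraMap ℝ 𝒜 δ = cfc (fun x : ℝ => x + δ) a := by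
      rw [cfc_add_const δ (fun x => x) a, cfc_id' ℝ a]
    rw [hadd, cfc_rpow (fun x hx => by linarith [hspec_pos x hx]) (by fun_prop) (.of_nonneg ha0)]
  have hcont : ContinuousOn (fun x : ℝ => x ^ (-r)) (spectrum ℝ a) :=
    continuousOn_id.rpow_const fun x hx => .inl (hspec_pos x hx).ne'
  have hcont' : ContinuousOn (fun x : ℝ => (x + δ) ^ (-r)) (spectrum ℝ a) :=
    (continuousOn_id.add continuousOn_const).rpow_const fun x hx =>
      .inl (by linarith [hspec_pos x hx] : 0 < x + δ).ne'
  have hcont_sub : ContinuousOn (fun x : ℝ => x ^ (-r) - (x + δ) ^ (-r)) (spectrum ℝ a) :=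
    hcont.sub hcont'
  calc a ^ (-r) - b ^ (-r) ≤ a ^ (-r) - (a + algebraMap ℝ 𝒜 δ) ^ (-r) :=
        sub_le_sub_left (rpow_neg_le_rpow_neg hr hb_le (hβpos.of_le hb)) _
    _ = cfc (fun x => x ^ (-r) - (x + δ) ^ (-r)) a := by
        rw [hshift, rpow_eq_cfc_real ha0, cfc_sub _ _ a hcont hcont']
    _ ≤ algebraMap ℝ 𝒜 (r * β ^ (-r - 1) * δ) := by
        rw [cfc_le_algebraMap_iff _ _ _ hcont_sub]
        intro x hx
        refine (Real.rpow_neg_sub_rpow_neg_add_le (hspec_pos x hx) (norm_nonneg _)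
          ⟨hr.1.le, hr.2⟩).trans ?_
        have := Real.rpow_le_rpow_of_nonpos hβ (hspec x hx) (by linarith [hr.1] : -r - 1 ≤ 0)
        exact mul_le_mul_of_nonneg_right (mul_le_mul_of_nonneg_left this hr.1.le) hδ

lemma norm_le_of_mem_Icc_algebraMap {a : 𝒜} {c : ℝ} (hc : 0 ≤ c)
    (h : a ∈ Icc (algebraMap ℝ 𝒜 (-c)) (algebraMap ℝ 𝒜 c)) : ‖a‖ ≤ c := by
  obtain ⟨hlo, hhi⟩ := h
  have ha : IsSelfAdjoint a := (IsSelfAdjoint.algebraMap 𝒜 (.all _)).of_ge hlo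
  rcases subsingleton_or_nontrivial 𝒜 with h | h
  · simp [Subsingleton.elim a 0, hc]
  rcases CStarAlgebra.norm_or_neg_norm_mem_spectrum ha with hmem | hmem
  · exact (le_algebraMap_iff_spectrum_le ha).1 hhi _ hmem
  · linarith [le_spectrum_of_algebraMap_le hlo _ hmem]

lemma norm_rpow_neg_sub_rpow_neg_le {β r : ℝ} (hβ : 0 < β) (hr : r ∈ Ioc 0 1) {a b : 𝒜}
    (ha : algebraMap ℝ 𝒜 β ≤ a) (hb : algebraMap ℝ 𝒜 β ≤ b) :
    ‖a ^ (-r) - b ^ (-r)‖ ≤ r * β ^ (-r - 1) * ‖a - b‖ := by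
  refine norm_le_of_mem_Icc_algebraMap (by have := hr.1; positivity)
    ⟨?_, rpow_neg_sub_rpow_neg_le hβ hr ha hb⟩
  rw [map_neg, neg_le, neg_sub, norm_sub_rev]
  exact rpow_neg_sub_rpow_neg_le hβ hr hb ha

end CFC

lemma norm_star_mul_mul_le {R : Type*} [NonUnitalNormedRing R] [StarRing R] [CStarRing R]
    (C M : R) : ‖star C * M * C‖ ≤ ‖C‖ ^ 2 * ‖M‖ := by
  calc ‖star C * M * C‖ ≤ ‖star C‖ * ‖M‖ * ‖C‖ := norm_mul₃_le
    _ = ‖C‖ ^ 2 * ‖M‖ := by rw [norm_star]; ring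

section PowerEquation

variable {𝒜 : Type*} [CStarAlgebra 𝒜] [PartialOrder 𝒜] [StarOrderedRing 𝒜]

noncomputable def powerEquationMap (Q A B : 𝒜) (r q : ℝ) (X : 𝒜) : 𝒜 :=
  Q - star A * X ^ (-r) * A - star B * X ^ (-q) * B

lemma smul_star_mul_self_le_algebraMap (C : 𝒜) {c : ℝ} (hc : 0 ≤ c) :
    c • (star C * C) ≤ algebraMap ℝ 𝒜 (c * ‖C‖ ^ 2) := by
  rw [map_mul, ← Algebra.smul_def]
  exact smul_le_smul_of_nonneg_left CStarAlgebra.star_mul_le_algebraMap_norm_sq hc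

variable {Q A B : 𝒜} {r q : ℝ}

lemma powerEquationMap_eq_self_iff {X : 𝒜} :
    powerEquationMap Q A B r q X = X ↔ X + star A * X ^ (-r) * A + star B * X ^ (-q) * B = Q := by
  rw [powerEquationMap, sub_sub, sub_eq_iff_eq_add, add_assoc, eq_comm]

lemma powerEquationMap_le (X : 𝒜) : powerEquationMap Q A B r q X ≤ Q := by
  rw [powerEquationMap, sub_sub]
  exact sub_le_self _ (add_nonneg (star_left_conjugate_nonneg CFC.rpow_nonneg A)
    (star_left_conjugate_nonneg CFC.rpow_nonneg B))

lemma algebraMap_le_powerEquationMap {α β : ℝ} (hα : 0 < α) (hr : 0 ≤ r) (hq : 0 ≤ q)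
    (hβ : algebraMap ℝ 𝒜 β ≤ Q - α ^ (-r) • (star A * A) - α ^ (-q) • (star B * B))
    {X : 𝒜} (hX : algebraMap ℝ 𝒜 α ≤ X) : algebraMap ℝ 𝒜 β ≤ powerEquationMap Q A B r q X := by
  have hconj : ∀ (C : 𝒜) (s : ℝ), 0 ≤ s →
      star C * X ^ (-s) * C ≤ α ^ (-s) • (star C * C) := fun C s hs => by
    simpa [Algebra.algebraMap_eq_smul_one] using
      star_left_conjugate_le_conjugate (CFC.rpow_neg_le_algebraMap hα hs hX) C
  exact hβ.trans (sub_le_sub (sub_le_sub_left (hconj A r hr) _) (hconj B q hq))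

lemma norm_powerEquationMap_sub_le {β : ℝ} (hβ : 0 < β) (hr : r ∈ Ioc 0 1) (hq : q ∈ Ioc 0 1)
    {X Y : 𝒜} (hX : algebraMap ℝ 𝒜 β ≤ X) (hY : algebraMap ℝ 𝒜 β ≤ Y) :
    ‖powerEquationMap Q A B r q X - powerEquationMap Q A B r q Y‖ ≤
      (r * β ^ (-r - 1) * ‖A‖ ^ 2 + q * β ^ (-q - 1) * ‖B‖ ^ 2) * ‖X - Y‖ := by
  have hdiff : powerEquationMap Q A B r q X - powerEquationMap Q A B r q Y =
      star A * (Y ^ (-r) - X ^ (-r)) * A + star B * (Y ^ (-q) - X ^ (-q)) * B := by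
    simp only [powerEquationMap, mul_sub, sub_mul]
    abel
  have hXY := norm_sub_rev X Y
  have hA := CFC.norm_rpow_neg_sub_rpow_neg_le hβ hr hY hX
  have hB := CFC.norm_rpow_neg_sub_rpow_neg_le hβ hq hY hX
  rw [hdiff]
  refine (norm_add_le _ _).trans ?_
  calc _ ≤ ‖A‖ ^ 2 * ‖Y ^ (-r) - X ^ (-r)‖ + ‖B‖ ^ 2 * ‖Y ^ (-q) - X ^ (-q)‖ :=
        add_le_add (norm_star_mul_mul_le _ _) (norm_star_mul_mul_le _ _)
    _ ≤ ‖A‖ ^ 2 * (r * β ^ (-r - 1) * ‖X - Y‖) + ‖B‖ ^ 2 * (q * β ^ (-q - 1) * ‖X - Y‖) := by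
        rw [hXY]; gcongr
    _ = _ := by ring

theorem existsUnique_powerEquation_solution {α β : ℝ} (hα : 0 < α) (hαβ : α ≤ β)
    (hr : r ∈ Ioc 0 1) (hq : q ∈ Ioc 0 1)
    (hβ : algebraMap ℝ 𝒜 β ≤ Q - α ^ (-r) • (star A * A) - α ^ (-q) • (star B * B))
    (hK : r * β ^ (-r - 1) * ‖A‖ ^ 2 + q * β ^ (-q - 1) * ‖B‖ ^ 2 < 1) :
    ∃! X, X ∈ Icc (algebraMap ℝ 𝒜 α) Q ∧
      X + star A * X ^ (-r) * A + star B * X ^ (-q) * B = Q := by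
  set G := powerEquationMap Q A B r q
  set K := r * β ^ (-r - 1) * ‖A‖ ^ 2 + q * β ^ (-q - 1) * ‖B‖ ^ 2
  have hβ0 : 0 < β := hα.trans_le hαβ
  have hK0 : 0 ≤ K := by have := hr.1; have := hq.1; positivity
  have hαβ' : algebraMap ℝ 𝒜 α ≤ algebraMap ℝ 𝒜 β := algebraMap_mono 𝒜 hαβ
  -- every solution above `α` already lies above `β`
  have hinv : ∀ X ∈ Icc (algebraMap ℝ 𝒜 α) Q, G X ∈ Icc (algebraMap ℝ 𝒜 β) Q := fun X hX =>
    ⟨algebraMap_le_powerEquationMap hα hr.1.le hq.1.le hβ hX.1, powerEquationMap_le X⟩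
  have hmaps : MapsTo G (Icc (algebraMap ℝ 𝒜 β) Q) (Icc (algebraMap ℝ 𝒜 β) Q) :=
    fun X hX => hinv X ⟨hαβ'.trans hX.1, hX.2⟩
  have hlip : ∀ X ∈ Icc (algebraMap ℝ 𝒜 β) Q, ∀ Y ∈ Icc (algebraMap ℝ 𝒜 β) Q,
      ‖G X - G Y‖ ≤ K * ‖X - Y‖ := fun X hX Y hY =>
    norm_powerEquationMap_sub_le hβ0 hr hq hX.1 hY.1
  have hcontr : ContractingWith K.toNNReal (hmaps.restrict G _ _) :=
    ⟨Real.toNNReal_lt_one.2 hK, LipschitzWith.of_dist_le_mul fun X Y => by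
      rw [Real.coe_toNNReal _ hK0]
      simpa [Subtype.dist_eq, dist_eq_norm] using hlip X X.2 Y Y.2⟩
  have hQ : Q ∈ Icc (algebraMap ℝ 𝒜 β) Q := by
    refine ⟨hβ.trans ?_, le_rfl⟩
    rw [sub_sub]
    exact sub_le_self _ (add_nonneg (smul_nonneg (Real.rpow_nonneg hα.le _)
      (star_mul_self_nonneg A)) (smul_nonneg (Real.rpow_nonneg hα.le _) (star_mul_self_nonneg B)))
  obtain ⟨X, hX, hfix, -⟩ := hcontr.exists_fixedPoint' isClosed_Icc.isComplete hmaps hQ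
    (edist_ne_top _ _)
  refine ⟨X, ⟨⟨hαβ'.trans hX.1, hX.2⟩, powerEquationMap_eq_self_iff.1 hfix⟩, ?_⟩
  rintro Z ⟨hZ, hZeq⟩
  have hZfix : G Z = Z := powerEquationMap_eq_self_iff.2 hZeq
  have hZ' : Z ∈ Icc (algebraMap ℝ 𝒜 β) Q := hZfix ▸ hinv Z hZ
  have := hlip Z hZ' X hX
  rw [hZfix, hfix] at this
  have : ‖Z - X‖ = 0 := by nlinarith [norm_nonneg (Z - X)]
  exact sub_eq_zero.1 (norm_eq_zero.1 this)

end PowerEquation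

section Matrix

open scoped Matrix.Norms.L2Operator MatrixOrder

variable {n : ℕ}

lemma specNorm_eq_norm (A : Matrix (Fin n) (Fin n) ℂ) : specNorm A = ‖A‖ := rfl

lemma hrpow_eq_rpow {X : Matrix (Fin n) (Fin n) ℂ} (hX : X.PosSemidef) (r : ℝ) :
    hrpow X r = X ^ r := by
  rw [hrpow, dif_pos hX.isHermitian, CFC.rpow_eq_cfc_real (nonneg_iff_posSemidef.2 hX),
    hX.isHermitian.cfc_eq, IsHermitian.cfc, Unitary.conjStarAlgAut_apply, star_eq_conjTranspose]
  rfl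

lemma algebraMap_lamMin_le {X : Matrix (Fin n) (Fin n) ℂ} (hX : X.IsHermitian) :
    algebraMap ℝ _ (lamMin X) ≤ X := by
  rw [algebraMap_le_iff_le_spectrum (ha := hX.isSelfAdjoint),
    hX.spectrum_real_eq_range_eigenvalues]
  rintro _ ⟨i, rfl⟩
  rw [lamMin, dif_pos hX]
  exact ciInf_le (finite_range _).bddBelow i

lemma le_lamMin_of_algebraMap_le (hn : 0 < n) {X : Matrix (Fin n) (Fin n) ℂ}
    (hX : X.IsHermitian) {c : ℝ} (h : algebraMap ℝ _ c ≤ X) : c ≤ lamMin X := by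
  have : Nonempty (Fin n) := ⟨⟨0, hn⟩⟩
  rw [lamMin, dif_pos hX]
  exact le_ciInf fun i => CFC.le_spectrum_of_algebraMap_le h _ (hX.eigenvalues_mem_spectrum_real i)

lemma lamMin_sub_mul_norm_sq_le (hn : 0 < n) {Q : Matrix (Fin n) (Fin n) ℂ} (hQ : Q.IsHermitian)
    (A : Matrix (Fin n) (Fin n) ℂ) {c : ℝ} (hc : 0 ≤ c) :
    lamMin Q - c * ‖A‖ ^ 2 ≤ lamMin (Q - c • (Aᴴ * A)) := by
  refine le_lamMin_of_algebraMap_le hn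
    (hQ.sub ((isHermitian_conjTranspose_mul_self A).smul (.all c))) ?_
  rw [map_sub]
  exact sub_le_sub (algebraMap_lamMin_le hQ) (smul_star_mul_self_le_algebraMap A hc)

lemma powerEquation_solution_iff {α : ℝ} (hα : 0 < α) (Q A B Y : Matrix (Fin n) (Fin n) ℂ)
    (r q : ℝ) :
    (Y.PosDef ∧ Y + Aᴴ * hrpow Y r * A + Bᴴ * hrpow Y q * B = Q ∧
      lle (α • (1 : Matrix (Fin n) (Fin n) ℂ)) Y ∧ lle Y Q) ↔
    (Y ∈ Icc (algebraMap ℝ _ α) Q ∧ Y + star A * Y ^ r * A + star B * Y ^ q * B = Q) := by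
  simp only [lle, ← le_iff, ← Algebra.algebraMap_eq_smul_one, star_eq_conjTranspose, mem_Icc]
  constructor
  · rintro ⟨hY, heq, hαY, hYQ⟩
    rw [hrpow_eq_rpow hY.posSemidef, hrpow_eq_rpow hY.posSemidef] at heq
    exact ⟨⟨hαY, hYQ⟩, heq⟩
  · rintro ⟨⟨hαY, hYQ⟩, heq⟩
    have hY : Y.PosDef :=
      isStrictlyPositive_iff_posDef.1 ((isStrictlyPositive_algebraMap hα).of_le hαY)
    rw [hrpow_eq_rpow hY.posSemidef, hrpow_eq_rpow hY.posSemidef]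
    exact ⟨hY, heq, hαY, hYQ⟩

end Matrix

theorem stmt12_general {n : ℕ} (hn : 0 < n) (s t p : ℝ) (hp : 1 ≤ p) (hpt : p ≤ t) (hts : t ≤ s)
    (A B Q : Matrix (Fin n) (Fin n) ℂ) (hQ : Q.PosDef)
    (α : ℝ) (hα0 : 0 < α)
    (hα2 : α + α ^ (-(t / s)) * specNorm A ^ 2 + α ^ (-(p / s)) * specNorm B ^ 2 < lamMin Q)
    (β : ℝ) (hβ : β = lamMin (Q - (α ^ (-(t / s))) • (Aᴴ * A) - (α ^ (-(p / s))) • (Bᴴ * B)))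
    (hβ2 : t * β ^ (-(t / s)) * specNorm A ^ 2 + p * β ^ (-(p / s)) * specNorm B ^ 2 < s * β) :
    ∃ Y : Matrix (Fin n) (Fin n) ℂ,
      (Y.PosDef ∧ Y + Aᴴ * hrpow Y (-(t / s)) * A + Bᴴ * hrpow Y (-(p / s)) * B = Q ∧
        lle (α • (1 : Matrix (Fin n) (Fin n) ℂ)) Y ∧ lle Y Q) ∧
      ∀ Z : Matrix (Fin n) (Fin n) ℂ,
        (Z.PosDef ∧ Z + Aᴴ * hrpow Z (-(t / s)) * A + Bᴴ * hrpow Z (-(p / s)) * B = Q ∧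
          lle (α • (1 : Matrix (Fin n) (Fin n) ℂ)) Z ∧ lle Z Q) →
        Z = Y := by
  open scoped Matrix.Norms.L2Operator MatrixOrder in
  rw [specNorm_eq_norm, specNorm_eq_norm] at hα2 hβ2
  have ht : 0 < t := by linarith
  have hs : 0 < s := by linarith
  have hr : t / s ∈ Ioc (0 : ℝ) 1 := ⟨div_pos ht hs, (div_le_one hs).2 hts⟩
  have hq : p / s ∈ Ioc (0 : ℝ) 1 := ⟨div_pos (by linarith) hs, (div_le_one hs).2 (hpt.trans hts)⟩
  set M := Q - α ^ (-(t / s)) • (Aᴴ * A) - α ^ (-(p / s)) • (Bᴴ * B)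
  have hQA : (Q - α ^ (-(t / s)) • (Aᴴ * A)).IsHermitian :=
    hQ.isHermitian.sub ((isHermitian_conjTranspose_mul_self A).smul (.all _))
  have hM : M.IsHermitian := hQA.sub ((isHermitian_conjTranspose_mul_self B).smul (.all _))
  have hMβ : algebraMap ℝ _ β ≤ M := hβ ▸ algebraMap_lamMin_le hM
  have hαβ : α < β := by
    have hA := lamMin_sub_mul_norm_sq_le hn hQ.isHermitian A (Real.rpow_nonneg hα0.le (-(t / s)))
    have hB := lamMin_sub_mul_norm_sq_le hn hQA B (Real.rpow_nonneg hα0.le (-(p / s)))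
    linarith
  have hβ0 : 0 < β := hα0.trans hαβ
  have hK : t / s * β ^ (-(t / s) - 1) * ‖A‖ ^ 2 + p / s * β ^ (-(p / s) - 1) * ‖B‖ ^ 2 < 1 := by
    have hsum : t / s * β ^ (-(t / s) - 1) * ‖A‖ ^ 2 + p / s * β ^ (-(p / s) - 1) * ‖B‖ ^ 2 =
        (t * β ^ (-(t / s)) * ‖A‖ ^ 2 + p * β ^ (-(p / s)) * ‖B‖ ^ 2) / (s * β) := by
      rw [Real.rpow_sub_one hβ0.ne', Real.rpow_sub_one hβ0.ne']
      field_simp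
    rwa [hsum, div_lt_one (mul_pos hs hβ0)]
  simpa only [ExistsUnique, ← powerEquation_solution_iff hα0] using
    existsUnique_powerEquation_solution hα0 hαβ.le hr hq hMβ hK

theorem stmt12 {n : ℕ} (hn : 0 < n) (s t p : ℝ) (hp : 1 ≤ p) (hpt : p ≤ t) (hts : t ≤ s)
    (A B Q : Matrix (Fin n) (Fin n) ℂ) (hA : IsUnit A) (hB : IsUnit B) (hQ : Q.PosDef)
    (α : ℝ) (hα0 : 0 < α) (hα1 : α ≤ lamMin Q)
    (hα2 : α + α ^ (-(t / s)) * specNorm A ^ 2 + α ^ (-(p / s)) * specNorm B ^ 2 < lamMin Q)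
    (β : ℝ) (hβ : β = lamMin (Q - (α ^ (-(t / s))) • (Aᴴ * A) - (α ^ (-(p / s))) • (Bᴴ * B)))
    (hβ2 : t * β ^ (-(t / s)) * specNorm A ^ 2 + p * β ^ (-(p / s)) * specNorm B ^ 2 < s * β) :
    ∃ Y : Matrix (Fin n) (Fin n) ℂ,
      (Y.PosDef ∧ Y + Aᴴ * hrpow Y (-(t / s)) * A + Bᴴ * hrpow Y (-(p / s)) * B = Q ∧
        lle (α • (1 : Matrix (Fin n) (Fin n) ℂ)) Y ∧ lle Y Q) ∧
      ∀ Z : Matrix (Fin n) (Fin n) ℂ,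
        (Z.PosDef ∧ Z + Aᴴ * hrpow Z (-(t / s)) * A + Bᴴ * hrpow Z (-(p / s)) * B = Q ∧
          lle (α • (1 : Matrix (Fin n) (Fin n) ℂ)) Z ∧ lle Z Q) →
        Z = Y :=
  stmt12_general hn s t p hp hpt hts A B Q hQ α hα0 hα2 β hβ hβ2
end
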